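/- arXiv:math/0405363 — 11 statements merged into one kernel-verified Lean document; each statement's English description precedes it below -/
import Mathlib

section
/- Let n ≥ 1 and let z₁, z₂ ∈ ℂ∖ℝ with z₁ ≠ z₂ and z₁ ≠ conj(z₂). Let π₁, π₂ be Hermitian projections of ℂⁿ. Let π̃₁ be the Hermitian projection of ℂⁿ whose range is the image of the range of π₁ under the invertible matrix g_{z₂,π₂}(z₁), and let π̃₂ be the Hermitian projection whose range is the image of the range of π₂ under g_{z₁,π₁}(z₂). Then for every λ ∈ ℂ∖{z₁, z₂}: g_{z₁,π̃₁}(λ)·g_{z₂,π₂}(λ) = g_{z₂,π̃₂}(λ)·g_{z₁,π₁}(λ). -/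
/-!
Write `twoValued z w e = z • e + w • (1 - e)`, so that `(λ - z) • g_{z,π}(λ) = λ - twoValued z z̄ π`
and `g_{z̄,π}(λ)` inverts `g_{z,π}(λ)`. After clearing denominators the claim says that two
products of monic linear pencils, `X₁ X₂` and `Z₂ Z₁`, coincide. Let `Y₁, Y₂` be the pencils of the
inverses of `g_{z₁,π₁}` and `g_{z₂,π̃₂}`. The range hypotheses, together with their adjoints, say
that the monic quartic `X₁ X₂ Y₁ Y₂` vanishes at `z₁, z₂, z̄₁, z̄₂`, so it is the scalar
`(λ - z₁)(λ - z₂)(λ - z̄₁)(λ - z̄₂)`: an algebraic Liouville argument showing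
`g_{z₁,π̃₁} g_{z₂,π₂} g_{z₁,π₁}⁻¹ g_{z₂,π̃₂}⁻¹ = 1`. Multiplying by `Z₂ Z₁` gives `X₁ X₂ = Z₂ Z₁`
away from the four points, hence everywhere.
-/

open Matrix Complex Filter

noncomputable section

/-- A Hermitian projection of ℂⁿ: a matrix with π* = π and π² = π. -/
def IsHermitianProj {n : ℕ} (π : Matrix (Fin n) (Fin n) ℂ) : Prop :=
  πᴴ = π ∧ π * π = π

/-- The simple element g_{z,π}(λ) = I + ((z - conj z)/(λ - z))·(I - π). -/
def simpleElt {n : ℕ} (z : ℂ) (π : Matrix (Fin n) (Fin n) ℂ) (lam : ℂ) :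
    Matrix (Fin n) (Fin n) ℂ :=
  1 + ((z - (starRingEnd ℂ) z) / (lam - z)) • (1 - π)

/-- The range of the linear map ℂⁿ → ℂⁿ defined by a matrix. -/
def mrange {n m : ℕ} (A : Matrix (Fin n) (Fin m) ℂ) :
    Submodule ℂ (EuclideanSpace ℂ (Fin n)) :=
  LinearMap.range (Matrix.toEuclideanLin A)

open Finset

theorem eq_zero_of_forall_sum_pow_smul_eq_zero {K M : Type*} [Field K] [AddCommGroup M]
    [Module K M] {d : ℕ} {r : Fin d → K} (hr : Function.Injective r) {c : Fin d → M}
    (h : ∀ j, ∑ i : Fin d, r j ^ (i : ℕ) • c i = 0) : c = 0 := by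
  funext i
  refine (Module.forall_dual_apply_eq_zero_iff K (c i)).1 fun φ => ?_
  have hφ : (fun i => φ (c i)) = 0 :=
    Matrix.eq_zero_of_forall_index_sum_pow_mul_eq_zero hr fun j => by
      simpa [map_sum] using congrArg φ (h j)
  exact congrFun hφ i

section LinProd

variable {K A : Type*} [Field K] [Ring A] [Algebra K A]

def linProd (N : List A) (x : K) : A := (N.map fun n => x • 1 - n).prod

theorem exists_linProd_eq (N : List A) :
    ∃ e : ℕ → A, ∀ x : K, linProd N x = x ^ N.length • 1 + ∑ k ∈ range N.length, x ^ k • e k := by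
  induction N with
  | nil => exact ⟨0, fun x => by simp [linProd]⟩
  | cons n N ih =>
    obtain ⟨e, he⟩ := ih
    refine ⟨fun k => (if k = 0 then 0 else e (k - 1)) - n * (if k < N.length then e k else 1),
      fun x => ?_⟩
    have hshift : ∑ k ∈ range (N.length + 1), x ^ k • (if k = 0 then 0 else e (k - 1))
        = ∑ k ∈ range N.length, x ^ (k + 1) • e k := by
      simp [sum_range_succ']
    have hlow : ∑ k ∈ range (N.length + 1), x ^ k • (n * if k < N.length then e k else 1)
        = ∑ k ∈ range N.length, x ^ k • (n * e k) + x ^ N.length • n := by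
      rw [sum_range_succ, if_neg (lt_irrefl _), mul_one]
      congr 1
      exact sum_congr rfl fun k hk => by rw [if_pos (mem_range.1 hk)]
    have hcons : linProd (n :: N) x = (x • 1 - n) * linProd N x := by simp [linProd]
    simp only [smul_sub, sum_sub_distrib, List.length_cons, hshift, hlow, hcons, he x, mul_add,
      sub_mul, mul_sum, smul_mul_assoc, mul_smul_comm, one_mul, mul_one, pow_succ, mul_smul]
    module

theorem linProd_eq_of_eq_at {N N' : List A} (hlen : N.length = N'.length)
    {r : Fin N.length → K} (hr : Function.Injective r)
    (h : ∀ j, linProd N (r j) = linProd N' (r j)) (x : K) : linProd N x = linProd N' x := by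
  obtain ⟨e, he⟩ := exists_linProd_eq (K := K) N
  obtain ⟨e', he'⟩ := exists_linProd_eq (K := K) N'
  have hdiff : ∀ x : K, linProd N x - linProd N' x
      = ∑ k : Fin N.length, x ^ (k : ℕ) • (e k - e' k) := by
    intro x
    rw [he, he', ← hlen, Fin.sum_univ_eq_sum_range (fun k => x ^ k • (e k - e' k))]
    simp only [smul_sub, sum_sub_distrib]
    abel
  have hc := eq_zero_of_forall_sum_pow_smul_eq_zero hr fun j => by rw [← hdiff, h, sub_self]
  rw [← sub_eq_zero, hdiff]
  simp [funext_iff.1 hc]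

theorem linProd_eq_of_eqOn {N N' : List A} (hlen : N.length = N'.length)
    {s : Set K} (hs : s.Infinite) (h : Set.EqOn (linProd N) (linProd N') s) (x : K) :
    linProd N x = linProd N' x :=
  linProd_eq_of_eq_at hlen (r := fun i => (hs.natEmbedding s i : K))
    (Subtype.val_injective.comp ((hs.natEmbedding s).injective.comp Fin.val_injective))
    (fun j => h (hs.natEmbedding s j).2) x

end LinProd

section TwoValued

variable {K A : Type*} [Field K] [Ring A] [Algebra K A]

def twoValued (z w : K) (e : A) : A := z • e + w • (1 - e)

theorem smul_one_sub_twoValued_left (z w : K) (e : A) :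
    z • 1 - twoValued z w e = (z - w) • (1 - e) := by
  unfold twoValued; module

theorem smul_one_sub_twoValued_right (z w : K) (e : A) :
    w • 1 - twoValued z w e = (w - z) • e := by
  unfold twoValued; module

theorem smul_one_sub_twoValued_swap_mul {e : A} (he : IsIdempotentElem e) (z w x : K) :
    (x • 1 - twoValued w z e) * (x • 1 - twoValued z w e) = ((x - w) * (x - z)) • 1 := by
  unfold twoValued
  simp only [mul_sub, sub_mul, mul_add, add_mul, smul_mul_assoc, mul_smul_comm, one_mul, mul_one,
    he.eq]
  module

end TwoValued

section Core

variable {K A : Type*} [Field K] [Ring A] [Algebra K A]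

theorem twoValued_permutability [Infinite K] {z₁ z₂ w₁ w₂ : K}
    (hdistinct : Function.Injective ![z₁, z₂, w₁, w₂]) {e₁ e₂ f₁ f₂ : A}
    (he₁ : IsIdempotentElem e₁) (hf₂ : IsIdempotentElem f₂)
    (h₁ : (1 - f₁) * (z₁ • 1 - twoValued z₂ w₂ e₂) * e₁ = 0)
    (h₂ : f₁ * (w₁ • 1 - twoValued z₂ w₂ e₂) * (1 - e₁) = 0)
    (h₃ : (1 - e₂) * (z₂ • 1 - twoValued w₁ z₁ e₁) * f₂ = 0)
    (h₄ : e₂ * (w₂ • 1 - twoValued w₁ z₁ e₁) * (1 - f₂) = 0) (x : K) :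
    (x • 1 - twoValued z₁ w₁ f₁) * (x • 1 - twoValued z₂ w₂ e₂)
      = (x • 1 - twoValued z₂ w₂ f₂) * (x • 1 - twoValued z₁ w₁ e₁) := by
  -- both sides are monic quartics vanishing at the four points
  have hquartic := linProd_eq_of_eq_at (K := K)
    (N := [twoValued z₁ w₁ f₁, twoValued z₂ w₂ e₂, twoValued w₁ z₁ e₁, twoValued w₂ z₂ f₂])
    (N' := [z₁ • 1, z₂ • 1, w₁ • 1, w₂ • 1]) rfl hdistinct (fun j => by
      fin_cases j <;> simp [linProd, ← mul_assoc, smul_one_sub_twoValued_left,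
        smul_one_sub_twoValued_right, h₁, h₂, h₃, h₄])
  have hoff : Set.EqOn (linProd [twoValued z₁ w₁ f₁, twoValued z₂ w₂ e₂])
      (linProd [twoValued z₂ w₂ f₂, twoValued z₁ w₁ e₁]) {z₁, z₂, w₁, w₂}ᶜ := by
    intro x hx
    simp only [Set.mem_compl_iff, Set.mem_insert_iff, Set.mem_singleton_iff, not_or] at hx
    have hs : (x - z₁) * (x - z₂) * (x - w₁) * (x - w₂) ≠ 0 := by
      simp [sub_eq_zero, hx.1, hx.2.1, hx.2.2.1, hx.2.2.2]
    have hq := hquartic x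
    have hYZ₁ := smul_one_sub_twoValued_swap_mul he₁ z₁ w₁ x
    have hYZ₂ := smul_one_sub_twoValued_swap_mul hf₂ z₂ w₂ x
    simp only [linProd, List.map_cons, List.map_nil, List.prod_cons, List.prod_nil, mul_one,
      ← sub_smul, smul_mul_assoc, one_mul, smul_smul] at hq ⊢
    set X₁ := x • (1 : A) - twoValued z₁ w₁ f₁
    set X₂ := x • (1 : A) - twoValued z₂ w₂ e₂
    set Y₁ := x • (1 : A) - twoValued w₁ z₁ e₁
    set Y₂ := x • (1 : A) - twoValued w₂ z₂ f₂
    set Z₁ := x • (1 : A) - twoValued z₁ w₁ e₁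
    set Z₂ := x • (1 : A) - twoValued z₂ w₂ f₂
    -- `Y₁ Y₂ (Z₂ Z₁)` is the nonzero scalar `(x - z₁)(x - z₂)(x - w₁)(x - w₂)`
    refine smul_right_injective A hs ?_
    calc ((x - z₁) * (x - z₂) * (x - w₁) * (x - w₂)) • (X₁ * X₂)
        = X₁ * X₂ * (Y₁ * (Y₂ * Z₂) * Z₁) := by
          rw [hYZ₂, mul_smul_comm, mul_one, smul_mul_assoc, hYZ₁, smul_smul, mul_smul_comm,
            mul_one]
          congr 1; ring
      _ = X₁ * (X₂ * (Y₁ * Y₂)) * (Z₂ * Z₁) := by simp only [mul_assoc]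
      _ = ((x - z₁) * (x - z₂) * (x - w₁) * (x - w₂)) • (Z₂ * Z₁) := by
          rw [hq, smul_mul_assoc, one_mul]
          congr 1; ring
  simpa [linProd] using
    linProd_eq_of_eqOn (by rfl) (Set.toFinite {z₁, z₂, w₁, w₂}).infinite_compl hoff x

end Core

section StarAlgebra

variable {A : Type*} [Ring A] [StarRing A] [Algebra ℂ A] [StarModule ℂ A]

theorem star_smul_one_sub_twoValued {e : A} (he : IsSelfAdjoint e) (x z w : ℂ) :
    star (x • 1 - twoValued z w e)
      = (starRingEnd ℂ) x • 1 - twoValued ((starRingEnd ℂ) z) ((starRingEnd ℂ) w) e := by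
  simp [twoValued, star_sub, star_add, star_smul, he.star_eq]

theorem mul_smul_one_sub_twoValued_mul_eq_zero_star {a b e : A} {x z w : ℂ}
    (h : a * (x • 1 - twoValued z w e) * b = 0)
    (ha : IsSelfAdjoint a) (hb : IsSelfAdjoint b) (he : IsSelfAdjoint e) :
    b * ((starRingEnd ℂ) x • 1 - twoValued ((starRingEnd ℂ) z) ((starRingEnd ℂ) w) e) * a = 0 := by
  simpa [star_mul, ha.star_eq, hb.star_eq, star_smul_one_sub_twoValued he, mul_assoc]
    using congrArg star h

end StarAlgebra

section Matrix

variable {n : ℕ}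

theorem IsHermitianProj.one_sub {π : Matrix (Fin n) (Fin n) ℂ} (hπ : IsHermitianProj π) :
    IsSelfAdjoint (1 - π) :=
  (IsSelfAdjoint.one _).sub hπ.1

theorem smul_simpleElt (z : ℂ) (π : Matrix (Fin n) (Fin n) ℂ) {lam : ℂ} (h : lam ≠ z) :
    (lam - z) • simpleElt z π lam = lam • 1 - twoValued z ((starRingEnd ℂ) z) π := by
  unfold simpleElt twoValued
  rw [smul_add, smul_smul, mul_div_cancel₀ _ (sub_ne_zero.2 h)]
  module

theorem simpleElt_conj_mul_simpleElt {π : Matrix (Fin n) (Fin n) ℂ} (hπ : IsIdempotentElem π)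
    {z lam : ℂ} (h : lam ≠ z) (h' : lam ≠ (starRingEnd ℂ) z) :
    simpleElt ((starRingEnd ℂ) z) π lam * simpleElt z π lam = 1 := by
  refine smul_right_injective _ (mul_ne_zero (sub_ne_zero.2 h') (sub_ne_zero.2 h)) ?_
  dsimp only
  rw [← smul_mul_smul_comm, smul_simpleElt _ _ h', smul_simpleElt _ _ h, conj_conj,
    smul_one_sub_twoValued_swap_mul hπ]

theorem mrange_mul (A B : Matrix (Fin n) (Fin n) ℂ) :
    mrange (A * B) = (mrange B).map (toEuclideanLin A) := by
  simp [mrange, LinearMap.range_comp]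

theorem one_sub_mul_eq_zero_of_mrange_le {F B : Matrix (Fin n) (Fin n) ℂ}
    (hF : IsIdempotentElem F) (h : mrange B ≤ mrange F) : (1 - F) * B = 0 := by
  apply toEuclideanLin.injective
  ext1 v
  obtain ⟨u, hu⟩ := h (LinearMap.mem_range_self _ v)
  rw [map_zero, LinearMap.zero_apply, toLpLin_mul_same, LinearMap.comp_apply, ← hu,
    ← LinearMap.comp_apply, ← toLpLin_mul_same, sub_mul, hF.eq, one_mul, sub_self, map_zero,
    LinearMap.zero_apply]

theorem mul_smul_one_sub_twoValued_mul_eq_zero_of_mrange_eq {z μ : ℂ} (hμ : μ ≠ z)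
    (hμ' : μ ≠ (starRingEnd ℂ) z) {π π' πt : Matrix (Fin n) (Fin n) ℂ} (hπ : IsIdempotentElem π)
    (hπ' : IsIdempotentElem π') (hπt : IsIdempotentElem πt)
    (hr : mrange πt = (mrange π).map (toEuclideanLin (simpleElt z π' μ))) :
    (1 - πt) * (μ • 1 - twoValued z ((starRingEnd ℂ) z) π') * π = 0 ∧
      (1 - π) * (μ • 1 - twoValued ((starRingEnd ℂ) z) z π') * πt = 0 := by
  constructor
  · rw [← smul_simpleElt _ _ hμ, mul_smul_comm, smul_mul_assoc, mul_assoc,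
      one_sub_mul_eq_zero_of_mrange_le hπt (by rw [mrange_mul, hr]), smul_zero]
  · have hinv : mrange (simpleElt ((starRingEnd ℂ) z) π' μ * πt) = mrange π := by
      rw [mrange_mul, hr, ← Submodule.map_comp, ← toLpLin_mul_same,
        simpleElt_conj_mul_simpleElt hπ' hμ hμ', toLpLin_one, Submodule.map_id]
    have hscale := smul_simpleElt ((starRingEnd ℂ) z) π' hμ'
    rw [conj_conj] at hscale
    rw [← hscale, mul_smul_comm, smul_mul_assoc, mul_assoc,
      one_sub_mul_eq_zero_of_mrange_le hπ hinv.le, smul_zero]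

end Matrix

theorem statement0_general {n : ℕ} (z₁ z₂ : ℂ)
    (hz₁ : z₁.im ≠ 0) (hz₂ : z₂.im ≠ 0)
    (h12 : z₁ ≠ z₂) (h12' : z₁ ≠ (starRingEnd ℂ) z₂)
    (π₁ π₂ πt₁ πt₂ : Matrix (Fin n) (Fin n) ℂ)
    (hπ₁ : IsHermitianProj π₁) (hπ₂ : IsHermitianProj π₂)
    (hπt₁ : IsHermitianProj πt₁) (hπt₂ : IsHermitianProj πt₂)
    (hr₁ : mrange πt₁ = (mrange π₁).map (Matrix.toEuclideanLin (simpleElt z₂ π₂ z₁)))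
    (hr₂ : mrange πt₂ = (mrange π₂).map (Matrix.toEuclideanLin (simpleElt z₁ π₁ z₂)))
    (lam : ℂ) (hl₁ : lam ≠ z₁) (hl₂ : lam ≠ z₂) :
    simpleElt z₁ πt₁ lam * simpleElt z₂ π₂ lam
      = simpleElt z₂ πt₂ lam * simpleElt z₁ π₁ lam := by
  have hconj₁ : z₁ ≠ (starRingEnd ℂ) z₁ := fun h => hz₁ (conj_eq_iff_im.1 h.symm)
  have hconj₂ : z₂ ≠ (starRingEnd ℂ) z₂ := fun h => hz₂ (conj_eq_iff_im.1 h.symm)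
  have h21' : z₂ ≠ (starRingEnd ℂ) z₁ := fun h => h12' (by rw [h, conj_conj])
  have hconj₁₂ : (starRingEnd ℂ) z₁ ≠ (starRingEnd ℂ) z₂ := (RingHom.injective _).ne h12
  have hpoles : Function.Injective ![z₁, z₂, (starRingEnd ℂ) z₁, (starRingEnd ℂ) z₂] := by
    simp [Function.Injective, Fin.forall_fin_succ, h12, h12', hconj₁, hconj₂, h21', h12.symm,
      h12'.symm, hconj₁.symm, hconj₂.symm, h21'.symm, hconj₁₂, hconj₁₂.symm]
  obtain ⟨h₁, h₂⟩ :=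
    mul_smul_one_sub_twoValued_mul_eq_zero_of_mrange_eq h12 h12' hπ₁.2 hπ₂.2 hπt₁.2 hr₁
  obtain ⟨h₄, h₃⟩ :=
    mul_smul_one_sub_twoValued_mul_eq_zero_of_mrange_eq h12.symm h21' hπ₂.2 hπ₁.2 hπt₂.2 hr₂
  have key := twoValued_permutability hpoles hπ₁.2 hπt₂.2 h₁
    (by simpa using mul_smul_one_sub_twoValued_mul_eq_zero_star h₂ hπ₁.one_sub hπt₁.1 hπ₂.1)
    h₃ (by simpa using mul_smul_one_sub_twoValued_mul_eq_zero_star h₄ hπt₂.one_sub hπ₂.1 hπ₁.1)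
    lam
  refine smul_right_injective _ (mul_ne_zero (sub_ne_zero.2 hl₁) (sub_ne_zero.2 hl₂)) ?_
  dsimp only
  rw [← smul_mul_smul_comm, smul_simpleElt _ _ hl₁, smul_simpleElt _ _ hl₂, key,
    mul_comm (lam - z₁), ← smul_mul_smul_comm, smul_simpleElt _ _ hl₂, smul_simpleElt _ _ hl₁]

/-- Permutability of simple elements: with π̃₁ the Hermitian projection onto
g_{z₂,π₂}(z₁)(range π₁) and π̃₂ the Hermitian projection onto g_{z₁,π₁}(z₂)(range π₂),
we have g_{z₁,π̃₁} g_{z₂,π₂} = g_{z₂,π̃₂} g_{z₁,π₁}. -/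
theorem statement0 {n : ℕ} (hn : 1 ≤ n) (z₁ z₂ : ℂ)
    (hz₁ : z₁.im ≠ 0) (hz₂ : z₂.im ≠ 0)
    (h12 : z₁ ≠ z₂) (h12' : z₁ ≠ (starRingEnd ℂ) z₂)
    (π₁ π₂ πt₁ πt₂ : Matrix (Fin n) (Fin n) ℂ)
    (hπ₁ : IsHermitianProj π₁) (hπ₂ : IsHermitianProj π₂)
    (hπt₁ : IsHermitianProj πt₁) (hπt₂ : IsHermitianProj πt₂)
    (hr₁ : mrange πt₁ = (mrange π₁).map (Matrix.toEuclideanLin (simpleElt z₂ π₂ z₁)))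
    (hr₂ : mrange πt₂ = (mrange π₂).map (Matrix.toEuclideanLin (simpleElt z₁ π₁ z₂)))
    (lam : ℂ) (hl₁ : lam ≠ z₁) (hl₂ : lam ≠ z₂) :
    simpleElt z₁ πt₁ lam * simpleElt z₂ π₂ lam
      = simpleElt z₂ πt₂ lam * simpleElt z₁ π₁ lam :=
  statement0_general z₁ z₂ hz₁ hz₂ h12 h12' π₁ π₂ πt₁ πt₂ hπ₁ hπ₂ hπt₁ hπt₂ hr₁ hr₂ lam hl₁ hl₂
end
end

section
/- Let n ≥ 1 and let z₁, z₂ ∈ ℂ∖ℝ with z₁ ≠ z₂ and z₁ ≠ conj(z₂). Let π₁, π₂ be Hermitian projections of ℂⁿ, let π̃₁ be the Hermitian projection whose range is the image of the range of π₁ under g_{z₂,π₂}(z₁), and π̃₂ the Hermitian projection whose range is the image of the range of π₂ under g_{z₁,π₁}(z₂). If τ₁, τ₂ are Hermitian projections of ℂⁿ such that g_{z₁,τ₁}(λ)·g_{z₂,π₂}(λ) = g_{z₂,τ₂}(λ)·g_{z₁,π₁}(λ) for all λ ∈ ℂ∖{z₁, z₂}, then τ₁ = π̃₁ and τ₂ =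 π̃₂. -/
open Matrix Complex Filter

noncomputable section

namespace St1

variable {n : ℕ}

lemma toEL_mul (A B : Matrix (Fin n) (Fin n) ℂ) :
    Matrix.toEuclideanLin (A * B) = (Matrix.toEuclideanLin A) ∘ₗ (Matrix.toEuclideanLin B) := by
  rw [toEuclideanLin_eq_toLin, Matrix.toLin_mul _ (PiLp.basisFun 2 ℂ (Fin n)) _]

lemma toEL_one : Matrix.toEuclideanLin (1 : Matrix (Fin n) (Fin n) ℂ) = LinearMap.id := by
  rw [toEuclideanLin_eq_toLin, Matrix.toLin_one]

lemma mul_one_add_smul (a b : ℂ) (P : Matrix (Fin n) (Fin n) ℂ) (hp : P * P = P)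
    (hab : a + b + a * b = 0) : (1 + a • P) * (1 + b • P) = 1 := by
  have key : (a • P) * (b • P) = (a * b) • P := by
    rw [Matrix.smul_mul, Matrix.mul_smul, hp, smul_smul]
  have h : (1 + a • P) * (1 + b • P) = 1 + (a + b + a * b) • P := by
    rw [mul_add, add_mul, add_mul, key]
    simp only [mul_one, one_mul]
    rw [add_smul, add_smul]
    abel
  rw [h, hab, zero_smul, add_zero]

lemma bij_of_mul_eq_one {A B : Matrix (Fin n) (Fin n) ℂ} (h : A * B = 1) :
    Function.Bijective (Matrix.toEuclideanLin A) := by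
  have h' : B * A = 1 := mul_eq_one_comm.mp h
  constructor
  · intro x y hxy
    have h2 : Matrix.toEuclideanLin B (Matrix.toEuclideanLin A x)
        = Matrix.toEuclideanLin B (Matrix.toEuclideanLin A y) := congrArg _ hxy
    rwa [← LinearMap.comp_apply, ← LinearMap.comp_apply, ← toEL_mul, h', toEL_one,
      LinearMap.id_apply, LinearMap.id_apply] at h2
  · intro y
    refine ⟨Matrix.toEuclideanLin B y, ?_⟩
    rw [← LinearMap.comp_apply, ← toEL_mul, h, toEL_one, LinearMap.id_apply]

lemma simpleElt_bij {z lam : ℂ} {π : Matrix (Fin n) (Fin n) ℂ} (hπ : π * π = π)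
    (h1 : lam ≠ z) (h2 : lam ≠ (starRingEnd ℂ) z) :
    Function.Bijective (Matrix.toEuclideanLin (simpleElt z π lam)) := by
  have hp : (1 - π) * (1 - π) = 1 - π := by
    have e : (1 - π) * (1 - π) = 1 - π - π + π * π := by noncomm_ring
    rw [e, hπ]; abel
  have hl1 : lam - z ≠ 0 := sub_ne_zero.2 h1
  have hl2 : lam - (starRingEnd ℂ) z ≠ 0 := sub_ne_zero.2 h2
  apply bij_of_mul_eq_one (B := 1 + (((starRingEnd ℂ) z - z) / (lam - (starRingEnd ℂ) z)) • (1 - π))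
  apply mul_one_add_smul _ _ _ hp
  field_simp
  ring

lemma mrange_mul (A B : Matrix (Fin n) (Fin n) ℂ) :
    mrange (A * B) = (mrange B).map (Matrix.toEuclideanLin A) := by
  rw [mrange, toEL_mul, LinearMap.range_comp]; rfl

lemma mrange_mul_of_surj (A G : Matrix (Fin n) (Fin n) ℂ)
    (h : Function.Surjective (Matrix.toEuclideanLin G)) : mrange (A * G) = mrange A := by
  rw [mrange_mul, mrange, LinearMap.range_eq_top.mpr h, Submodule.map_top]
  rfl

lemma finrank_map_bij (G : Matrix (Fin n) (Fin n) ℂ) (h : Function.Bijective (Matrix.toEuclideanLin G))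
    (p : Submodule ℂ (EuclideanSpace ℂ (Fin n))) :
    Module.finrank ℂ (p.map (Matrix.toEuclideanLin G)) = Module.finrank ℂ p := by
  exact LinearEquiv.finrank_map_eq (LinearEquiv.ofBijective _ h) p

lemma finrank_add (p : Matrix (Fin n) (Fin n) ℂ) (hp : p * p = p) :
    Module.finrank ℂ (mrange p) + Module.finrank ℂ (mrange (1 - p)) = n := by
  have hker : mrange (1 - p) = LinearMap.ker (Matrix.toEuclideanLin p) := by
    apply le_antisymm
    · rintro x ⟨y, rfl⟩
      have : p * (1 - p) = 0 := by rw [mul_sub, mul_one, hp, sub_self]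
      simp only [LinearMap.mem_ker, ← LinearMap.comp_apply, ← toEL_mul, this, map_zero,
        LinearMap.zero_apply]
    · intro x hx
      refine ⟨x, ?_⟩
      have := (LinearMap.mem_ker).mp hx
      rw [show (1 : Matrix (Fin n) (Fin n) ℂ) - p = 1 - p from rfl, map_sub, LinearMap.sub_apply,
        toEL_one, LinearMap.id_apply, this, sub_zero]
  rw [hker, mrange]
  have := LinearMap.finrank_range_add_finrank_ker (Matrix.toEuclideanLin p)
  rwa [finrank_euclideanSpace_fin] at this

lemma herm_absorb {p q : Matrix (Fin n) (Fin n) ℂ} (hp : p * p = p)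
    (h : mrange q ≤ mrange p) : p * q = q := by
  apply Matrix.toEuclideanLin.injective
  rw [toEL_mul]
  ext x
  obtain ⟨y, hy⟩ := h ⟨x, rfl⟩
  simp only [LinearMap.comp_apply]
  rw [← hy, ← LinearMap.comp_apply, ← toEL_mul, hp]

lemma herm_proj_ext {p q : Matrix (Fin n) (Fin n) ℂ} (hp : IsHermitianProj p)
    (hq : IsHermitianProj q) (h : mrange p = mrange q) : p = q := by
  have h1 : q * p = p := herm_absorb hq.2 h.le
  have h2 : p * q = q := herm_absorb hp.2 h.ge
  have := congrArg Matrix.conjTranspose h1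
  rw [Matrix.conjTranspose_mul, hp.1, hq.1] at this
  rw [← this, h2]

lemma affine_vanish {A B : Matrix (Fin n) (Fin n) ℂ} (z₁ z₂ : ℂ)
    (h : ∀ lam : ℂ, lam ≠ z₁ → lam ≠ z₂ → lam • A + B = 0) : A = 0 ∧ B = 0 := by
  obtain ⟨x, hx⟩ := Infinite.exists_notMem_finset ({z₁, z₂} : Finset ℂ)
  obtain ⟨y, hy⟩ := Infinite.exists_notMem_finset ({z₁, z₂, x} : Finset ℂ)
  simp only [Finset.mem_insert, Finset.mem_singleton, not_or] at hx hy
  have h1 := h x hx.1 hx.2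
  have h2 := h y hy.1 hy.2.1
  have hA : A = 0 := by
    have hsub : (x - y) • A = 0 := by
      rw [sub_smul]
      calc x • A - y • A = (x • A + B) - (y • A + B) := by abel
        _ = 0 := by rw [h1, h2, sub_zero]
    rcases smul_eq_zero.mp hsub with h | h
    · exact absurd (sub_eq_zero.mp h) (fun hh => hy.2.2 hh.symm)
    · exact h
  refine ⟨hA, ?_⟩
  rw [hA, smul_zero, zero_add] at h1
  exact h1

lemma half {π τ G Gσ : Matrix (Fin n) (Fin n) ℂ}
    (hπ : IsHermitianProj π) (hτ : IsHermitianProj τ)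
    (hG : Function.Bijective (Matrix.toEuclideanLin G))
    (hGσ : Function.Bijective (Matrix.toEuclideanLin Gσ))
    (heq : (1 - τ) * G = Gσ * (1 - π)) :
    mrange τ = (mrange π).map (Matrix.toEuclideanLin G) := by
  have hz : (1 - π) * π = 0 := by rw [sub_mul, one_mul, hπ.2, sub_self]
  have habs : τ * (G * π) = G * π := by
    have h0 : (1 - τ) * (G * π) = 0 := by
      rw [← Matrix.mul_assoc, heq, Matrix.mul_assoc, hz, Matrix.mul_zero]
    rw [sub_mul, one_mul, sub_eq_zero] at h0
    exact h0.symm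
  have hle : (mrange π).map (Matrix.toEuclideanLin G) ≤ mrange τ := by
    rw [← mrange_mul]
    calc mrange (G * π) = mrange (τ * (G * π)) := by rw [habs]
      _ ≤ mrange τ := by rw [mrange, toEL_mul]; exact LinearMap.range_comp_le_range _ _
  have r1 : Module.finrank ℂ (mrange (1 - τ)) = Module.finrank ℂ (mrange (1 - π)) := by
    have h2 : mrange ((1 - τ) * G) = mrange (Gσ * (1 - π)) := by rw [heq]
    rw [mrange_mul_of_surj _ _ hG.surjective, mrange_mul] at h2
    rw [h2, finrank_map_bij _ hGσ]
  have s1 := finrank_add τ hτ.2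
  have s2 := finrank_add π hπ.2
  have r2 : Module.finrank ℂ (mrange τ)
      = Module.finrank ℂ ((mrange π).map (Matrix.toEuclideanLin G)) := by
    rw [finrank_map_bij _ hG]; omega
  exact (Submodule.eq_of_le_of_finrank_eq hle r2.symm).symm

end St1

set_option maxHeartbeats 2000000 in
/-- Uniqueness in the permutability formula: if g_{z₁,τ₁} g_{z₂,π₂} = g_{z₂,τ₂} g_{z₁,π₁}
for Hermitian projections τ₁, τ₂, then τ₁ = π̃₁ and τ₂ = π̃₂, where π̃₁, π̃₂ are the
Hermitian projections onto g_{z₂,π₂}(z₁)(range π₁) and g_{z₁,π₁}(z₂)(range π₂). -/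
theorem statement1 {n : ℕ} (hn : 1 ≤ n) (z₁ z₂ : ℂ)
    (hz₁ : z₁.im ≠ 0) (hz₂ : z₂.im ≠ 0)
    (h12 : z₁ ≠ z₂) (h12' : z₁ ≠ (starRingEnd ℂ) z₂)
    (π₁ π₂ πt₁ πt₂ τ₁ τ₂ : Matrix (Fin n) (Fin n) ℂ)
    (hπ₁ : IsHermitianProj π₁) (hπ₂ : IsHermitianProj π₂)
    (hπt₁ : IsHermitianProj πt₁) (hπt₂ : IsHermitianProj πt₂)
    (hτ₁ : IsHermitianProj τ₁) (hτ₂ : IsHermitianProj τ₂)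
    (hr₁ : mrange πt₁ = (mrange π₁).map (Matrix.toEuclideanLin (simpleElt z₂ π₂ z₁)))
    (hr₂ : mrange πt₂ = (mrange π₂).map (Matrix.toEuclideanLin (simpleElt z₁ π₁ z₂)))
    (heq : ∀ lam : ℂ, lam ≠ z₁ → lam ≠ z₂ →
      simpleElt z₁ τ₁ lam * simpleElt z₂ π₂ lam
        = simpleElt z₂ τ₂ lam * simpleElt z₁ π₁ lam) :
    τ₁ = πt₁ ∧ τ₂ = πt₂ := by
  have hc₁ : z₁ - (starRingEnd ℂ) z₁ ≠ 0 :=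
    sub_ne_zero.2 fun h => hz₁ (Complex.conj_eq_iff_im.mp h.symm)
  have hc₂ : z₂ - (starRingEnd ℂ) z₂ ≠ 0 :=
    sub_ne_zero.2 fun h => hz₂ (Complex.conj_eq_iff_im.mp h.symm)
  have h21 : z₂ ≠ z₁ := h12.symm
  have h21' : z₂ ≠ (starRingEnd ℂ) z₁ := by
    intro h
    exact h12' (by rw [h, Complex.conj_conj])
  have hz12 : z₁ - z₂ ≠ 0 := sub_ne_zero.2 h12
  have hz21 : z₂ - z₁ ≠ 0 := sub_ne_zero.2 h21
  set A : Matrix (Fin n) (Fin n) ℂ :=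
    (z₁ - (starRingEnd ℂ) z₁) • ((1 - τ₁) - (1 - π₁))
      + (z₂ - (starRingEnd ℂ) z₂) • ((1 - π₂) - (1 - τ₂)) with hAdef
  set B : Matrix (Fin n) (Fin n) ℂ :=
    (-((z₁ - (starRingEnd ℂ) z₁) * z₂)) • ((1 - τ₁) - (1 - π₁))
      + (-((z₂ - (starRingEnd ℂ) z₂) * z₁)) • ((1 - π₂) - (1 - τ₂))
      + ((z₁ - (starRingEnd ℂ) z₁) * (z₂ - (starRingEnd ℂ) z₂)) •
          ((1 - τ₁) * (1 - π₂) - (1 - τ₂) * (1 - π₁)) with hBdef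
  have hvanish : ∀ lam : ℂ, lam ≠ z₁ → lam ≠ z₂ → lam • A + B = 0 := by
    intro lam hl1 hl2
    have hd₁ : lam - z₁ ≠ 0 := sub_ne_zero.2 hl1
    have hd₂ : lam - z₂ ≠ 0 := sub_ne_zero.2 hl2
    have H := heq lam hl1 hl2
    have key : lam • A + B = ((lam - z₁) * (lam - z₂)) •
        (simpleElt z₁ τ₁ lam * simpleElt z₂ π₂ lam
          - simpleElt z₂ τ₂ lam * simpleElt z₁ π₁ lam) := by
      rw [hAdef, hBdef]
      simp only [simpleElt, mul_add, add_mul, sub_mul, mul_sub, mul_one, one_mul, Matrix.smul_mul,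
        Matrix.mul_smul, smul_smul, smul_sub, smul_add]
      match_scalars <;> field_simp <;> ring
    rw [key, H, sub_self, smul_zero]
  obtain ⟨hA0, hB0⟩ := St1.affine_vanish z₁ z₂ hvanish
  have eq1 : (1 - τ₁) * simpleElt z₂ π₂ z₁ = simpleElt z₂ τ₂ z₁ * (1 - π₁) := by
    have e1 : ((z₁ - (starRingEnd ℂ) z₁) * (z₁ - z₂)) •
        ((1 - τ₁) * simpleElt z₂ π₂ z₁ - simpleElt z₂ τ₂ z₁ * (1 - π₁)) = z₁ • A + B := by
      rw [hAdef, hBdef]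
      simp only [simpleElt, mul_add, add_mul, sub_mul, mul_sub, mul_one, one_mul, Matrix.smul_mul,
        Matrix.mul_smul, smul_smul, smul_sub, smul_add]
      match_scalars <;> field_simp <;> ring
    rw [hA0, hB0, smul_zero, zero_add] at e1
    rcases smul_eq_zero.mp e1 with h | h
    · exact absurd h (mul_ne_zero hc₁ hz12)
    · exact sub_eq_zero.mp h
  have eq2 : (1 - τ₂) * simpleElt z₁ π₁ z₂ = simpleElt z₁ τ₁ z₂ * (1 - π₂) := by
    have e2 : (-((z₂ - (starRingEnd ℂ) z₂) * (z₂ - z₁))) •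
        ((1 - τ₂) * simpleElt z₁ π₁ z₂ - simpleElt z₁ τ₁ z₂ * (1 - π₂)) = z₂ • A + B := by
      rw [hAdef, hBdef]
      simp only [simpleElt, mul_add, add_mul, sub_mul, mul_sub, mul_one, one_mul, Matrix.smul_mul,
        Matrix.mul_smul, smul_smul, smul_sub, smul_add]
      match_scalars <;> field_simp <;> ring
    rw [hA0, hB0, smul_zero, zero_add] at e2
    rcases smul_eq_zero.mp e2 with h | h
    · exact absurd (neg_eq_zero.mp h) (mul_ne_zero hc₂ hz21)
    · exact sub_eq_zero.mp h
  have bijG₂ := St1.simpleElt_bij hπ₂.2 h12 h12'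
  have bijGτ₂ := St1.simpleElt_bij hτ₂.2 h12 h12'
  have bijG₁ := St1.simpleElt_bij hπ₁.2 h21 h21'
  have bijGτ₁ := St1.simpleElt_bij hτ₁.2 h21 h21'
  constructor
  · apply St1.herm_proj_ext hτ₁ hπt₁
    rw [hr₁]
    exact St1.half hπ₁ hτ₁ bijG₂ bijGτ₂ eq1
  · apply St1.herm_proj_ext hτ₂ hπt₂
    rw [hr₂]
    exact St1.half hπ₂ hτ₂ bijG₁ bijGτ₁ eq2
end
end

section
/- Let n ≥ 1, z ∈ ℂ∖ℝ, and let U ⊆ ℂ be open with z ∈ U and conj(z) ∈ U. Let f : U → Mₙ(ℂ) be holomorphic with f(z) invertible and f(conj(z)) = (f(z)*)⁻¹ (as holds when f satisfies the reality condition f(conj(λ))* f(λ) = I). Let π be a Hermitian projection of ℂⁿ and let π̃ be the Hermitian projection whose range is the image of the range of π under f(z). Then there exists a holomorphic map F : U → Mₙ(ℂ) such that F(λ) = g_{z,π̃}(λ) · f(λ) · g_{z,π}(λ)⁻¹ for all λ ∈ U∖{z, conj(z)}; equivalently, F(λ)·g_{z,π}(λ) = g_{z,π̃}(λ)·f(λ)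 on U∖{z, conj(z)}. -/
open Matrix Complex Filter

noncomputable section

private lemma tel_mul {n : ℕ} (A B : Matrix (Fin n) (Fin n) ℂ) (x : EuclideanSpace ℂ (Fin n)) :
    Matrix.toEuclideanLin (A * B) x = Matrix.toEuclideanLin A (Matrix.toEuclideanLin B x) := by
  simp [Matrix.toEuclideanLin_apply, Matrix.mulVec_mulVec]

private lemma tel_zero {n : ℕ} {A : Matrix (Fin n) (Fin n) ℂ}
    (h : ∀ x : EuclideanSpace ℂ (Fin n), Matrix.toEuclideanLin A x = 0) : A = 0 := by
  apply Matrix.toEuclideanLin.injective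
  ext x
  simp [h x]

private lemma alg_identity {n : ℕ} (A A₁ A₂ P Q : Matrix (Fin n) (Fin n) ℂ) (a b : ℂ)
    (hP : P * P = P) (hab : a + b + a * b = 0)
    (h1 : (1 - Q) * (A₁ * P) = 0) (h2 : Q * (A₂ * (1 - P)) = 0) :
    (A + a • ((1 - Q) * (A - A₁) * P) + b • (Q * (A - A₂) * (1 - P))) * (1 + a • (1 - P))
      = (1 + a • (1 - Q)) * A := by
  have e1 : (1 - Q) * (A - A₁) * P = (1 - Q) * A * P := by
    rw [mul_sub (1 - Q) A A₁, sub_mul, mul_assoc (1 - Q) A₁ P, h1, sub_zero]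
  have e2 : Q * (A - A₂) * (1 - P) = Q * A * (1 - P) := by
    rw [mul_sub Q A A₂, sub_mul, mul_assoc Q A₂ (1 - P), h2, sub_zero]
  rw [e1, e2]
  have hPP : P * (1 - P) = 0 := by rw [mul_sub, mul_one, hP, sub_self]
  have hPP' : (1 - P) * (1 - P) = 1 - P := by
    rw [sub_mul, one_mul, mul_sub, mul_one, hP, sub_self, sub_zero]
  set X := (1 - Q) * A * P with hX
  set Y := Q * A * (1 - P) with hY
  set W := (1 - Q) * A * (1 - P) with hW
  have hXP : X * (1 - P) = 0 := by rw [hX, mul_assoc, hPP, mul_zero]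
  have hYP : Y * (1 - P) = Y := by rw [hY, mul_assoc, hPP']
  have hA1 : A * (1 - P) = Y + W := by
    rw [hY, hW, ← add_mul, ← add_mul, add_sub_cancel, one_mul]
  have hQA : (1 - Q) * A = X + W := by
    rw [hX, hW, ← mul_add, add_sub_cancel, mul_one]
  have lhs_eq : (A + a • X + b • Y) * (1 + a • (1 - P))
      = A + a • X + b • Y + (a • (Y + W) + ((a * a) • (0 : Matrix (Fin n) (Fin n) ℂ) + (a * b) • Y)) := by
    rw [mul_add, mul_one, add_mul, add_mul]
    simp only [smul_mul_assoc, mul_smul_comm, smul_smul]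
    rw [hXP, hYP, hA1]
    module
  have rhs_eq : (1 + a • (1 - Q)) * A = A + a • (X + W) := by
    rw [add_mul, one_mul, smul_mul_assoc, hQA]
  rw [lhs_eq, rhs_eq, smul_zero]
  match_scalars
  any_goals ring
  all_goals linear_combination hab

/-- If f is holomorphic on U with f(z) invertible and f(conj z) = (f(z)*)⁻¹, and π̃ is the
Hermitian projection onto f(z)(range π), then g_{z,π̃} · f · g_{z,π}⁻¹ extends to a
holomorphic map F on U, i.e. there is a holomorphic F with F·g_{z,π} = g_{z,π̃}·f on
U∖{z, conj z}. -/
theorem statement2 {n : ℕ} (hn : 1 ≤ n) (z : ℂ) (hz : z.im ≠ 0)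
    (U : Set ℂ) (hU : IsOpen U) (hzU : z ∈ U) (hzcU : (starRingEnd ℂ) z ∈ U)
    (f : ℂ → Matrix (Fin n) (Fin n) ℂ)
    (hf : ∀ i j, DifferentiableOn ℂ (fun lam => f lam i j) U)
    (hfz : IsUnit (f z))
    (hfcz : f ((starRingEnd ℂ) z) = ((f z)ᴴ)⁻¹)
    (π πt : Matrix (Fin n) (Fin n) ℂ)
    (hπ : IsHermitianProj π) (hπt : IsHermitianProj πt)
    (hr : mrange πt = (mrange π).map (Matrix.toEuclideanLin (f z))) :
    ∃ F : ℂ → Matrix (Fin n) (Fin n) ℂ,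
      (∀ i j, DifferentiableOn ℂ (fun lam => F lam i j) U) ∧
      ∀ lam ∈ U, lam ≠ z → lam ≠ (starRingEnd ℂ) z →
        F lam * simpleElt z π lam = simpleElt z πt lam * f lam := by
  set zb := (starRingEnd ℂ) z with hzb
  -- Key fact 1
  have key1 : (1 - πt) * (f z * π) = 0 := by
    apply tel_zero
    intro x
    have hmem : Matrix.toEuclideanLin (f z * π) x ∈ mrange πt := by
      rw [hr, tel_mul]
      exact Submodule.mem_map_of_mem ⟨x, rfl⟩
    obtain ⟨w, hw⟩ := hmem
    have hfix : Matrix.toEuclideanLin πt (Matrix.toEuclideanLin (f z * π) x)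
        = Matrix.toEuclideanLin (f z * π) x := by
      rw [← hw, ← tel_mul, hπt.2]
    rw [tel_mul]
    have : Matrix.toEuclideanLin ((1 : Matrix (Fin n) (Fin n) ℂ) - πt)
        = Matrix.toEuclideanLin (1 : Matrix (Fin n) (Fin n) ℂ) - Matrix.toEuclideanLin πt :=
      map_sub _ _ _
    rw [this, LinearMap.sub_apply, hfix]
    simp [Matrix.toEuclideanLin_apply, Matrix.one_mulVec, sub_self]
  -- Key fact 2
  have hdet : IsUnit (f z).det := (Matrix.isUnit_iff_isUnit_det _).mp hfz
  have hinv : (f z)⁻¹ * f z = 1 := Matrix.nonsing_inv_mul _ hdet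
  have key2' : (1 - π) * ((f z)⁻¹ * πt) = 0 := by
    apply tel_zero
    intro x
    have hmem : Matrix.toEuclideanLin πt x ∈ mrange πt := ⟨x, rfl⟩
    rw [hr] at hmem
    obtain ⟨v, ⟨w, hwv⟩, hv⟩ := hmem
    have h1 : Matrix.toEuclideanLin ((f z)⁻¹) (Matrix.toEuclideanLin πt x) = v := by
      rw [← hv, ← tel_mul, hinv]
      simp [Matrix.toEuclideanLin_apply, Matrix.one_mulVec]
    have h2 : Matrix.toEuclideanLin π v = v := by rw [← hwv, ← tel_mul, hπ.2]
    rw [tel_mul, tel_mul, h1]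
    have : Matrix.toEuclideanLin ((1 : Matrix (Fin n) (Fin n) ℂ) - π)
        = Matrix.toEuclideanLin (1 : Matrix (Fin n) (Fin n) ℂ) - Matrix.toEuclideanLin π :=
      map_sub _ _ _
    rw [this, LinearMap.sub_apply, h2]
    simp [Matrix.toEuclideanLin_apply, Matrix.one_mulVec, sub_self]
  have key2 : πt * (((f z)ᴴ)⁻¹ * (1 - π)) = 0 := by
    have h := congrArg Matrix.conjTranspose key2'
    simpa [Matrix.conjTranspose_mul, Matrix.conjTranspose_sub, Matrix.conjTranspose_one,
      hπ.1, hπt.1, Matrix.conjTranspose_nonsing_inv, mul_assoc] using h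
  -- the extension
  refine ⟨fun lam => f lam
      + (z - zb) • ((1 - πt) * Matrix.of (fun i j => dslope (fun t => f t i j) z lam) * π)
      + (zb - z) • (πt * Matrix.of (fun i j => dslope (fun t => f t i j) zb lam) * (1 - π)),
    ?_, ?_⟩
  · -- differentiability
    have hABC : ∀ (A B : Matrix (Fin n) (Fin n) ℂ) (M : ℂ → Matrix (Fin n) (Fin n) ℂ),
        (∀ i j, DifferentiableOn ℂ (fun lam => M lam i j) U) → ∀ i j,
        DifferentiableOn ℂ (fun lam => (A * M lam * B) i j) U := by
      intro A B M hM i j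
      simp only [Matrix.mul_apply]
      apply DifferentiableOn.fun_sum
      intro l _
      apply DifferentiableOn.mul ?_ (differentiableOn_const _)
      apply DifferentiableOn.fun_sum
      intro k _
      exact (differentiableOn_const _).mul (hM k l)
    have hD1 : ∀ i j, DifferentiableOn ℂ
        (fun lam => (Matrix.of (fun i j => dslope (fun t => f t i j) z lam)) i j) U := by
      intro i j
      simpa using (Complex.differentiableOn_dslope (hU.mem_nhds hzU)).mpr (hf i j)
    have hD2 : ∀ i j, DifferentiableOn ℂ
        (fun lam => (Matrix.of (fun i j => dslope (fun t => f t i j) zb lam)) i j) U := by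
      intro i j
      simpa using (Complex.differentiableOn_dslope (hU.mem_nhds hzcU)).mpr (hf i j)
    intro i j
    simp only [Matrix.add_apply, Matrix.smul_apply, smul_eq_mul]
    exact ((hf i j).add ((differentiableOn_const _).mul (hABC _ _ _ hD1 i j))).add
      ((differentiableOn_const _).mul (hABC _ _ _ hD2 i j))
  · -- the identity
    intro lam hlamU hne hne2
    have hlz : lam - z ≠ 0 := sub_ne_zero.mpr hne
    have hlzb : lam - zb ≠ 0 := sub_ne_zero.mpr hne2
    have hD1 : Matrix.of (fun i j => dslope (fun t => f t i j) z lam)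
        = (lam - z)⁻¹ • (f lam - f z) := by
      ext i j
      simp [dslope_of_ne _ hne, slope, smul_eq_mul]
    have hD2 : Matrix.of (fun i j => dslope (fun t => f t i j) zb lam)
        = (lam - zb)⁻¹ • (f lam - f zb) := by
      ext i j
      simp [dslope_of_ne _ hne2, slope, smul_eq_mul]
    beta_reduce
    rw [hD1, hD2, hfcz]
    rw [Matrix.mul_smul, Matrix.smul_mul, smul_smul, Matrix.mul_smul, Matrix.smul_mul, smul_smul]
    have hsπ : simpleElt z π lam = 1 + ((z - zb) * (lam - z)⁻¹) • (1 - π) := by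
      rw [simpleElt, div_eq_mul_inv, hzb]
    have hsπt : simpleElt z πt lam = 1 + ((z - zb) * (lam - z)⁻¹) • (1 - πt) := by
      rw [simpleElt, div_eq_mul_inv, hzb]
    rw [hsπ, hsπt]
    have hab : (z - zb) * (lam - z)⁻¹ + (zb - z) * (lam - zb)⁻¹
        + ((z - zb) * (lam - z)⁻¹) * ((zb - z) * (lam - zb)⁻¹) = 0 := by
      field_simp
      ring
    exact alg_identity (f lam) (f z) (((f z)ᴴ)⁻¹) π πt _ _ hπ.2 hab key1 key2
end
end

section
/- Let n ≥ 1, z ∈ ℂ∖ℝ, and let π₁, π₂ be Hermitian projections of ℂⁿ with orthogonal ranges, i.e. π₂·π₁ = 0. Then τ := π₁ + π₂ is a Hermitian projection, and for every λ ∈ ℂ∖{z}: g_{z,π₂}(λ)·g_{z,π₁}(λ) = ((λ − conj(z))/(λ − z)) · g_{z,τ}(λ). -/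
open Matrix Complex Filter

noncomputable section

theorem isHermitianProj_iff_isStarProjection {n : ℕ} {π : Matrix (Fin n) (Fin n) ℂ} :
    IsHermitianProj π ↔ IsStarProjection π := by
  rw [isStarProjection_iff', and_comm]
  rfl

/-- The factor `1 + c` appears because `(1 - q) + (1 - p) = 1 + (1 - (p + q))`. -/
theorem one_add_smul_one_sub_mul_one_add_smul_one_sub {R A : Type*} [CommRing R] [Ring A]
    [Algebra R A] (c : R) {p q : A} (hqp : q * p = 0) :
    (1 + c • (1 - q)) * (1 + c • (1 - p)) = (1 + c) • (1 + c • (1 - (p + q))) := by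
  have hcompl : (1 - q) * (1 - p) = 1 - (p + q) := by
    rw [sub_mul, mul_sub, mul_sub, hqp, one_mul, one_mul, mul_one]
    abel
  rw [add_mul, mul_add, mul_add, smul_mul_smul_comm, hcompl, one_mul, one_mul, mul_one]
  module

theorem sub_div_sub_eq_one_add {K : Type*} [Field K] {a b c : K} (hac : a ≠ c) :
    (a - b) / (a - c) = 1 + (c - b) / (a - c) := by
  rw [one_add_div (sub_ne_zero.mpr hac), sub_add_sub_cancel]

theorem statement3_general {n : ℕ} (z : ℂ)
    (π₁ π₂ : Matrix (Fin n) (Fin n) ℂ)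
    (hπ₁ : IsHermitianProj π₁) (hπ₂ : IsHermitianProj π₂)
    (horth : π₂ * π₁ = 0) :
    IsHermitianProj (π₁ + π₂) ∧
    ∀ lam : ℂ, lam ≠ z →
      simpleElt z π₂ lam * simpleElt z π₁ lam
        = ((lam - (starRingEnd ℂ) z) / (lam - z)) • simpleElt z (π₁ + π₂) lam := by
  simp only [isHermitianProj_iff_isStarProjection] at hπ₁ hπ₂ ⊢
  refine ⟨add_comm π₂ π₁ ▸ hπ₂.add hπ₁ horth, fun lam hlam => ?_⟩
  rw [sub_div_sub_eq_one_add hlam]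
  exact one_add_smul_one_sub_mul_one_add_smul_one_sub _ horth

/-- If π₁, π₂ are Hermitian projections with orthogonal ranges (π₂·π₁ = 0), then
τ = π₁ + π₂ is a Hermitian projection and
g_{z,π₂}(λ)·g_{z,π₁}(λ) = ((λ − conj z)/(λ − z)) · g_{z,τ}(λ) for λ ≠ z. -/
theorem statement3 {n : ℕ} (hn : 1 ≤ n) (z : ℂ) (hz : z.im ≠ 0)
    (π₁ π₂ : Matrix (Fin n) (Fin n) ℂ)
    (hπ₁ : IsHermitianProj π₁) (hπ₂ : IsHermitianProj π₂)
    (horth : π₂ * π₁ = 0) :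
    IsHermitianProj (π₁ + π₂) ∧
    ∀ lam : ℂ, lam ≠ z →
      simpleElt z π₂ lam * simpleElt z π₁ lam
        = ((lam - (starRingEnd ℂ) z) / (lam - z)) • simpleElt z (π₁ + π₂) lam :=
  statement3_general z π₁ π₂ hπ₁ hπ₂ horth
end
end

section
/- Let n ≥ 1, z ∈ ℂ∖ℝ, and let π₁, π₂ be the Hermitian projections of ℂⁿ onto subspaces V₁, V₂ respectively. Suppose V₂¹ := V₂ ∩ V₁^⊥ ≠ {0}. Let τ₂ be the Hermitian projection onto V₂ ∩ (V₂¹)^⊥ and τ₁ the Hermitian projection onto V₁ + V₂¹ (an orthogonal direct sum, since V₂¹ ⊆ V₁^⊥). Then range τ₂ ∩ (range τ₁)^⊥ = {0}, and for every λ ∈ ℂ∖{z}: g_{z,π₂}(λ)·g_{z,π₁}(λ) = g_{z,τ₂}(λ)·g_{z,τ₁}(λ). -/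
open Matrix Complex Filter

noncomputable section

/-!
Let `W = V₂ ∩ V₁ᗮ` and let `p` be the orthogonal projection onto `W`. Since `W ⟂ V₁` and
`W ≤ V₂`, one has `τ₁ = π₁ + p` and `τ₂ = π₂ - p`. The relations `π₂ p = p`, `p π₁ = 0` and
`p² = p` say exactly that `p` can be moved from the left factor `g_{z,π₂}` to the right factor
`g_{z,π₁}` without changing the product.
-/

/-- The linear terms of both sides agree, and the relations give
`(1 - a₂ + p) * (1 - a₁ - p) = (1 - a₂) * (1 - a₁)` for the quadratic ones. -/
theorem one_add_smul_one_sub_mul_eq_of_transfer {R S : Type*} [CommSemiring S] [Ring R]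
    [Algebra S R] (c : S) {a₁ a₂ p : R} (h₂ : a₂ * p = p) (h₁ : p * a₁ = 0) (hp : p * p = p) :
    (1 + c • (1 - a₂)) * (1 + c • (1 - a₁)) =
      (1 + c • (1 - (a₂ - p))) * (1 + c • (1 - (a₁ + p))) := by
  simp only [add_mul, mul_add, sub_mul, mul_sub, one_mul, mul_one, smul_mul_assoc, mul_smul_comm,
    h₂, h₁, hp, smul_sub, smul_add, smul_zero]
  abel

namespace Submodule

variable {𝕜 E : Type*} [RCLike 𝕜] [NormedAddCommGroup E] [InnerProductSpace 𝕜 E]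

theorem starProjection_sup_of_isOrtho {U V : Submodule 𝕜 E} [U.HasOrthogonalProjection]
    [V.HasOrthogonalProjection] [(U ⊔ V).HasOrthogonalProjection] (h : U ⟂ V) :
    (U ⊔ V).starProjection = U.starProjection + V.starProjection := by
  ext x
  have hU := U.sub_starProjection_mem_orthogonal x
  have hV := V.sub_starProjection_mem_orthogonal x
  refine eq_starProjection_of_mem_orthogonal (add_mem (mem_sup_left (U.starProjection_apply_mem x))
    (mem_sup_right (V.starProjection_apply_mem x))) ?_
  rw [← inf_orthogonal, _root_.add_apply, ← sub_sub]
  refine ⟨sub_mem hU (h.symm (V.starProjection_apply_mem x)), ?_⟩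
  rw [sub_right_comm]
  exact sub_mem hV (h (U.starProjection_apply_mem x))

theorem starProjection_inf_orthogonal_of_le {V W : Submodule 𝕜 E} [V.HasOrthogonalProjection]
    [W.HasOrthogonalProjection] [(V ⊓ Wᗮ).HasOrthogonalProjection] (h : W ≤ V) :
    (V ⊓ Wᗮ).starProjection = V.starProjection - W.starProjection := by
  ext x
  have hV := V.sub_starProjection_mem_orthogonal x
  have hW := W.sub_starProjection_mem_orthogonal x
  refine eq_starProjection_of_mem_orthogonal
    ⟨sub_mem (V.starProjection_apply_mem x) (h (W.starProjection_apply_mem x)), ?_⟩ ?_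
  · simpa using sub_mem hW (orthogonal_le h hV)
  · have := add_mem (orthogonal_le inf_le_left hV)
      (orthogonal_le inf_le_right (W.le_orthogonal_orthogonal (W.starProjection_apply_mem x)))
    rwa [_root_.sub_apply, ← sub_add]

theorem starProjection_mul_starProjection_of_le {U V : Submodule 𝕜 E} [U.HasOrthogonalProjection]
    [V.HasOrthogonalProjection] (h : U ≤ V) :
    V.starProjection * U.starProjection = U.starProjection := by
  ext x
  exact starProjection_eq_self_iff.mpr (h (U.starProjection_apply_mem x))

theorem inf_orthogonal_inf_sup_orthogonal_eq_bot (V₁ V₂ : Submodule 𝕜 E) :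
    V₂ ⊓ (V₂ ⊓ V₁ᗮ)ᗮ ⊓ (V₁ ⊔ V₂ ⊓ V₁ᗮ)ᗮ = ⊥ :=
  eq_bot_iff.mpr <| le_trans
    (le_inf (le_inf (inf_le_left.trans inf_le_left)
      (inf_le_right.trans (orthogonal_le le_sup_left))) (inf_le_left.trans inf_le_right))
    (inf_orthogonal_eq_bot (V₂ ⊓ V₁ᗮ)).le

end Submodule

theorem IsHermitianProj.toEuclideanCLM_eq_starProjection {n : ℕ} {π : Matrix (Fin n) (Fin n) ℂ}
    (h : IsHermitianProj π) {V : Submodule ℂ (EuclideanSpace ℂ (Fin n))}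
    (hV : mrange π = V) : toEuclideanCLM (n := Fin n) (𝕜 := ℂ) π = V.starProjection := by
  subst hV
  exact (isStarProjection_iff_eq_starProjection_range.mp
    ((⟨h.2, h.1⟩ : IsStarProjection π).map (toEuclideanCLM (n := Fin n) (𝕜 := ℂ)))).2

theorem toEuclideanCLM_simpleElt {n : ℕ} (z : ℂ) (π : Matrix (Fin n) (Fin n) ℂ) (lam : ℂ) :
    toEuclideanCLM (n := Fin n) (𝕜 := ℂ) (simpleElt z π lam) =
      1 + ((z - (starRingEnd ℂ) z) / (lam - z)) • (1 - toEuclideanCLM (n := Fin n) (𝕜 := ℂ) π) := by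
  simp only [simpleElt, map_add, map_one, map_smul, map_sub]

theorem statement4_general {n : ℕ} (z : ℂ)
    (V₁ V₂ : Submodule ℂ (EuclideanSpace ℂ (Fin n)))
    (π₁ π₂ τ₁ τ₂ : Matrix (Fin n) (Fin n) ℂ)
    (hπ₁ : IsHermitianProj π₁) (hπ₂ : IsHermitianProj π₂)
    (hτ₁ : IsHermitianProj τ₁) (hτ₂ : IsHermitianProj τ₂)
    (hrπ₁ : mrange π₁ = V₁) (hrπ₂ : mrange π₂ = V₂)
    (hrτ₂ : mrange τ₂ = V₂ ⊓ (V₂ ⊓ V₁ᗮ)ᗮ)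
    (hrτ₁ : mrange τ₁ = V₁ ⊔ (V₂ ⊓ V₁ᗮ)) :
    mrange τ₂ ⊓ (mrange τ₁)ᗮ = ⊥ ∧
    ∀ lam : ℂ, lam ≠ z →
      simpleElt z π₂ lam * simpleElt z π₁ lam
        = simpleElt z τ₂ lam * simpleElt z τ₁ lam := by
  refine ⟨by rw [hrτ₂, hrτ₁]; exact Submodule.inf_orthogonal_inf_sup_orthogonal_eq_bot V₁ V₂,
    fun lam _ => ?_⟩
  set W := V₂ ⊓ V₁ᗮ
  have hV₁W : V₁ ⟂ W := (Submodule.isOrtho_orthogonal_right V₁).mono_right inf_le_right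
  have hτ₁W := hτ₁.toEuclideanCLM_eq_starProjection hrτ₁
  have hτ₂W := hτ₂.toEuclideanCLM_eq_starProjection hrτ₂
  rw [Submodule.starProjection_sup_of_isOrtho hV₁W] at hτ₁W
  rw [Submodule.starProjection_inf_orthogonal_of_le inf_le_left] at hτ₂W
  refine EquivLike.injective (toEuclideanCLM (n := Fin n) (𝕜 := ℂ)) ?_
  simp only [map_mul, toEuclideanCLM_simpleElt, hπ₁.toEuclideanCLM_eq_starProjection hrπ₁,
    hπ₂.toEuclideanCLM_eq_starProjection hrπ₂, hτ₁W, hτ₂W]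
  exact one_add_smul_one_sub_mul_eq_of_transfer (S := ℂ) _
    (Submodule.starProjection_mul_starProjection_of_le inf_le_left)
    hV₁W.symm.starProjection_comp_starProjection W.isIdempotentElem_starProjection

/-- Lemma 4.6(2): if V₂¹ = V₂ ∩ V₁^⊥ ≠ 0, with τ₂ the projection onto V₂ ∩ (V₂¹)^⊥ and τ₁
the projection onto V₁ ⊕ V₂¹, then range τ₂ ∩ (range τ₁)^⊥ = 0 and
g_{z,π₂} g_{z,π₁} = g_{z,τ₂} g_{z,τ₁}. -/
theorem statement4 {n : ℕ} (hn : 1 ≤ n) (z : ℂ) (hz : z.im ≠ 0)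
    (V₁ V₂ : Submodule ℂ (EuclideanSpace ℂ (Fin n)))
    (π₁ π₂ τ₁ τ₂ : Matrix (Fin n) (Fin n) ℂ)
    (hπ₁ : IsHermitianProj π₁) (hπ₂ : IsHermitianProj π₂)
    (hτ₁ : IsHermitianProj τ₁) (hτ₂ : IsHermitianProj τ₂)
    (hrπ₁ : mrange π₁ = V₁) (hrπ₂ : mrange π₂ = V₂)
    (hne : V₂ ⊓ V₁ᗮ ≠ ⊥)
    (hrτ₂ : mrange τ₂ = V₂ ⊓ (V₂ ⊓ V₁ᗮ)ᗮ)
    (hrτ₁ : mrange τ₁ = V₁ ⊔ (V₂ ⊓ V₁ᗮ)) :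
    mrange τ₂ ⊓ (mrange τ₁)ᗮ = ⊥ ∧
    ∀ lam : ℂ, lam ≠ z →
      simpleElt z π₂ lam * simpleElt z π₁ lam
        = simpleElt z τ₂ lam * simpleElt z τ₁ lam :=
  statement4_general z V₁ V₂ π₁ π₂ τ₁ τ₂ hπ₁ hπ₂ hτ₁ hτ₂ hrπ₁ hrπ₂ hrτ₂ hrτ₁
end
end

section
/- Let n ≥ 1 and let π₁, …, π_k be Hermitian projections of ℂⁿ such that range π_j ∩ (range π_{j−1})^⊥ = {0} for all 2 ≤ j ≤ k. Then the kernel of the matrix product π_k^⊥ · π_{k−1}^⊥ ⋯ π_1^⊥ (as a linear map ℂⁿ → ℂⁿ) equals range π₁, and the rank of π_k^⊥ · π_{k−1}^⊥ ⋯ π_1^⊥ equals n − rank π₁. -/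
open Matrix Complex Filter

noncomputable section

lemma teL_mul {n : ℕ} (A B : Matrix (Fin n) (Fin n) ℂ) :
    Matrix.toEuclideanLin (A * B) = (Matrix.toEuclideanLin A) ∘ₗ (Matrix.toEuclideanLin B) := by
  rw [Matrix.toEuclideanLin_eq_toLin]
  exact Matrix.toLin_mul _ _ _ A B

lemma teL_one {n : ℕ} :
    Matrix.toEuclideanLin (1 : Matrix (Fin n) (Fin n) ℂ) = LinearMap.id := by
  rw [Matrix.toEuclideanLin_eq_toLin, Matrix.toLin_one]

lemma rank_eq_finrank_mrange {n m : ℕ} (A : Matrix (Fin n) (Fin m) ℂ) :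
    A.rank = Module.finrank ℂ (mrange A) := by
  rw [mrange, Matrix.toEuclideanLin_eq_toLin]
  exact A.rank_eq_finrank_range_toLin _ _

lemma ker_one_sub {n : ℕ} {π : Matrix (Fin n) (Fin n) ℂ} (h : IsHermitianProj π) :
    LinearMap.ker (Matrix.toEuclideanLin (1 - π)) = mrange π := by
  ext x
  simp only [LinearMap.mem_ker, mrange, LinearMap.mem_range]
  constructor
  · intro hx
    rw [map_sub, LinearMap.sub_apply, teL_one, LinearMap.id_apply, sub_eq_zero] at hx
    exact ⟨x, hx.symm⟩
  · rintro ⟨y, rfl⟩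
    rw [← LinearMap.comp_apply, ← teL_mul, sub_mul, one_mul, h.2, sub_self, map_zero,
      LinearMap.zero_apply]

lemma range_one_sub_le {n : ℕ} {π : Matrix (Fin n) (Fin n) ℂ} (h : IsHermitianProj π) :
    LinearMap.range (Matrix.toEuclideanLin (1 - π)) ≤ (mrange π)ᗮ := by
  rintro _ ⟨x, rfl⟩
  rw [Submodule.mem_orthogonal]
  rintro _ ⟨y, rfl⟩
  have hadj : Matrix.toEuclideanLin π = LinearMap.adjoint (Matrix.toEuclideanLin π) := by
    conv_lhs => rw [← h.1]
    exact Matrix.toEuclideanLin_conjTranspose_eq_adjoint π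
  rw [hadj, LinearMap.adjoint_inner_left, ← LinearMap.comp_apply, ← teL_mul, mul_sub, mul_one,
    h.2, sub_self, map_zero, LinearMap.zero_apply, inner_zero_right]

/-- Main induction: for projections π₀,…,π_m with the chain condition, the kernel of
(1-π_m)⋯(1-π₀) is range π₀ and its range is contained in (range π_m)ᗮ. -/
lemma aux_main {n : ℕ} : ∀ (m : ℕ) (π : Fin (m + 1) → Matrix (Fin n) (Fin n) ℂ),
    (∀ i, IsHermitianProj (π i)) →
    (∀ i j : Fin (m + 1), (i : ℕ) + 1 = (j : ℕ) →
      mrange (π j) ⊓ (mrange (π i))ᗮ = ⊥) →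
    LinearMap.ker (Matrix.toEuclideanLin
        ((List.ofFn fun i : Fin (m + 1) => (1 : Matrix (Fin n) (Fin n) ℂ) - π i)).reverse.prod)
      = mrange (π 0) ∧
    LinearMap.range (Matrix.toEuclideanLin
        ((List.ofFn fun i : Fin (m + 1) => (1 : Matrix (Fin n) (Fin n) ℂ) - π i)).reverse.prod)
      ≤ (mrange (π (Fin.last m)))ᗮ := by
  intro m
  induction m with
  | zero =>
    intro π hπ _
    have : ((List.ofFn fun i : Fin 1 => (1 : Matrix (Fin n) (Fin n) ℂ) - π i)).reverse.prod
        = 1 - π 0 := by simp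
    rw [this]
    exact ⟨ker_one_sub (hπ 0), range_one_sub_le (hπ 0)⟩
  | succ m ih =>
    intro π hπ hmin
    have hlist : ((List.ofFn fun i : Fin (m + 2) =>
        (1 : Matrix (Fin n) (Fin n) ℂ) - π i)).reverse.prod
        = ((1 : Matrix (Fin n) (Fin n) ℂ) - π (Fin.last (m + 1))) *
          ((List.ofFn fun i : Fin (m + 1) =>
            (1 : Matrix (Fin n) (Fin n) ℂ) - π i.castSucc)).reverse.prod := by
      rw [List.ofFn_succ' fun i : Fin (m + 2) => (1 : Matrix (Fin n) (Fin n) ℂ) - π i]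
      simp [List.concat_eq_append, List.prod_cons]
    obtain ⟨ihker, ihrange⟩ := ih (fun i => π i.castSucc) (fun i => hπ i.castSucc)
      (fun i j hij => hmin i.castSucc j.castSucc (by simpa using hij))
    constructor
    · rw [hlist, teL_mul]
      ext x
      simp only [LinearMap.mem_ker, LinearMap.comp_apply]
      constructor
      · intro hx
        set Q := Matrix.toEuclideanLin ((List.ofFn fun i : Fin (m + 1) =>
          (1 : Matrix (Fin n) (Fin n) ℂ) - π i.castSucc)).reverse.prod with hQ
        have h1 : Q x ∈ mrange (π (Fin.last (m + 1))) := by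
          rw [← ker_one_sub (hπ (Fin.last (m + 1)))]
          exact hx
        have h2 : Q x ∈ (mrange (π (Fin.last m).castSucc))ᗮ :=
          ihrange ⟨x, rfl⟩
        have h3 : Q x = 0 := by
          have := hmin (Fin.last m).castSucc (Fin.last (m + 1)) (by simp [Fin.last])
          have hmem : Q x ∈ mrange (π (Fin.last (m + 1))) ⊓
              (mrange (π (Fin.last m).castSucc))ᗮ := ⟨h1, h2⟩
          rw [this] at hmem
          exact hmem
        have : x ∈ LinearMap.ker Q := h3
        rw [ihker] at this
        have h0 : (0 : Fin (m + 1)).castSucc = (0 : Fin (m + 2)) := rfl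
        rwa [h0] at this
      · intro hx
        have h0 : (0 : Fin (m + 1)).castSucc = (0 : Fin (m + 2)) := rfl
        rw [← h0, ← ihker] at hx
        rw [LinearMap.mem_ker] at hx
        rw [hx, map_zero]
    · rw [hlist, teL_mul]
      intro x hx
      obtain ⟨y, hy⟩ := hx
      exact range_one_sub_le (hπ (Fin.last (m + 1))) ⟨_, hy⟩

/-- Proposition 4.8(2),(3): under the minimal-factorization condition, the kernel of
π_k^⊥ ⋯ π_1^⊥ equals range π₁, and its rank is n − rank π₁. -/
theorem statement6 {n k : ℕ} (hn : 1 ≤ n) (hk : 1 ≤ k)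
    (π : Fin k → Matrix (Fin n) (Fin n) ℂ)
    (hπ : ∀ i, IsHermitianProj (π i))
    (hmin : ∀ i j : Fin k, (i : ℕ) + 1 = (j : ℕ) →
      mrange (π j) ⊓ (mrange (π i))ᗮ = ⊥) :
    LinearMap.ker (Matrix.toEuclideanLin
        ((List.ofFn fun i : Fin k => (1 : Matrix (Fin n) (Fin n) ℂ) - π i)).reverse.prod)
      = mrange (π ⟨0, hk⟩) ∧
    ((List.ofFn fun i : Fin k => (1 : Matrix (Fin n) (Fin n) ℂ) - π i)).reverse.prod.rank
      = n - (π ⟨0, hk⟩).rank := by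
  obtain ⟨m, rfl⟩ : ∃ m, k = m + 1 := ⟨k - 1, (Nat.succ_pred_eq_of_pos hk).symm⟩
  have h0 : (⟨0, hk⟩ : Fin (m + 1)) = 0 := rfl
  obtain ⟨hker, _⟩ := aux_main m π hπ hmin
  rw [h0]
  refine ⟨hker, ?_⟩
  set P := ((List.ofFn fun i : Fin (m + 1) =>
    (1 : Matrix (Fin n) (Fin n) ℂ) - π i)).reverse.prod with hP
  have hrn : Module.finrank ℂ (LinearMap.range (Matrix.toEuclideanLin P)) +
      Module.finrank ℂ (LinearMap.ker (Matrix.toEuclideanLin P)) =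
      Module.finrank ℂ (EuclideanSpace ℂ (Fin n)) :=
    LinearMap.finrank_range_add_finrank_ker _
  have hfn : Module.finrank ℂ (EuclideanSpace ℂ (Fin n)) = n := by
    simp [finrank_euclideanSpace]
  have h1 : P.rank = Module.finrank ℂ (LinearMap.range (Matrix.toEuclideanLin P)) :=
    rank_eq_finrank_mrange P
  have h2 : (π 0).rank = Module.finrank ℂ (LinearMap.ker (Matrix.toEuclideanLin P)) := by
    rw [hker]; exact rank_eq_finrank_mrange (π 0)
  omega
end
end

section
/- Let n ≥ 1 and z ∈ ℂ∖ℝ. Suppose m, m' ≥ 0 are integers, τ₁, …, τ_l and σ₁, …, σ_{l'} are Hermitian projections of ℂⁿ, each different from 0 and from I, with range τ_j ∩ (range τ_{j−1})^⊥ = {0} for 2 ≤ j ≤ l and range σ_j ∩ (range σ_{j−1})^⊥ = {0} for 2 ≤ j ≤ l'. If ((λ − conj(z))/(λ − z))^m · g_{z,τ_l}(λ)⋯g_{z,τ_1}(λ) = ((λ − conj(z))/(λ − z))^{m'} · g_{z,σ_{l'}}(λ)⋯g_{z,σ_1}(λ) for all λ ∈ ℂ∖{z, conj(z)}, then m = m',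 l = l', and τ_j = σ_j for every 1 ≤ j ≤ l. -/
open Matrix Complex Filter

noncomputable section

/-!
Each side is `(λ - z)^-(m + l)` times a matrix function continuous at `z` whose value there is
`(z - z̄)^(m + l) τ_l^⊥ ⋯ τ_1^⊥`. Minimality makes the kernel of `τ_l^⊥ ⋯ τ_1^⊥` equal to
`range τ_1`, so this value is nonzero (as `τ_1 ≠ I`). Comparing pole orders and leading coefficients
at `z` gives `m + l = m' + l'` and `range τ_1 = range σ_1`, hence `τ_1 = σ_1`. Since
`g_{z,π}⁻¹ = g_{z̄,π}`, the common rightmost factor cancels, and induction on `l` concludes.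
-/

open Topology ComplexConjugate

section RevProd

variable {M : Type*} [Monoid M] {l : ℕ}

/-- `revProd f = f (l - 1) * ⋯ * f 0`, the order of the product `g_{z,τ_l} ⋯ g_{z,τ_1}`. -/
def revProd (f : Fin l → M) : M :=
  (List.ofFn f).reverse.prod

@[simp]
theorem revProd_zero (f : Fin 0 → M) : revProd f = 1 := rfl

theorem revProd_succ (f : Fin (l + 1) → M) : revProd f = revProd (Fin.tail f) * f 0 := by
  simp [revProd, List.ofFn_succ, Fin.tail_def]

theorem map_revProd {N F : Type*} [Monoid N] [FunLike F M N] [MonoidHomClass F M N] (φ : F)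
    (f : Fin l → M) : φ (revProd f) = revProd fun j => φ (f j) := by
  induction l with
  | zero => simp
  | succ l ih => rw [revProd_succ, revProd_succ, map_mul, ih]; rfl

theorem revProd_smul {R : Type*} [Monoid R] [MulAction R M] [IsScalarTower R M M]
    [SMulCommClass R M M] (r : R) (f : Fin l → M) :
    (revProd fun j => r • f j) = r ^ l • revProd f := by
  induction l with
  | zero => simp
  | succ l ih =>
    rw [revProd_succ, revProd_succ, Fin.tail_def, ih, smul_mul_smul_comm, ← pow_succ]
    rfl

theorem continuous_revProd {X : Type*} [TopologicalSpace X] [TopologicalSpace M]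
    [ContinuousMul M] {f : Fin l → X → M} (hf : ∀ j, Continuous (f j)) :
    Continuous fun x => revProd fun j => f j x := by
  induction l with
  | zero => simp only [revProd_zero]; exact continuous_const
  | succ l ih =>
    simp_rw [revProd_succ]
    exact (ih fun j => hf j.succ).mul (hf 0)

end RevProd

theorem eq_of_inv_pow_smul_eventuallyEq {𝕜 E : Type*} [NontriviallyNormedField 𝕜]
    [AddCommGroup E] [Module 𝕜 E] [TopologicalSpace E] [ContinuousSMul 𝕜 E] [T2Space E]
    {f g : 𝕜 → E} {z : 𝕜} {a b : ℕ} (hf : ContinuousAt f z) (hg : ContinuousAt g z)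
    (hfz : f z ≠ 0) (hgz : g z ≠ 0)
    (h : ∀ᶠ x in 𝓝[≠] z, ((x - z) ^ a)⁻¹ • f x = ((x - z) ^ b)⁻¹ • g x) :
    a = b ∧ f z = g z := by
  wlog hab : a ≤ b generalizing a b f g
  · obtain ⟨hba, hgf⟩ := this hg hf hgz hfz (h.mono fun x hx => hx.symm) (le_of_not_ge hab)
    exact ⟨hba.symm, hgf.symm⟩
  have hg_eq : ∀ᶠ x in 𝓝[≠] z, (x - z) ^ (b - a) • f x = g x := by
    filter_upwards [h, self_mem_nhdsWithin] with x hx hxz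
    have hxz : x - z ≠ 0 := sub_ne_zero.2 hxz
    calc (x - z) ^ (b - a) • f x = (x - z) ^ b • ((x - z) ^ a)⁻¹ • f x := by
          rw [smul_smul, pow_sub₀ _ hxz hab]
      _ = g x := by rw [hx, smul_inv_smul₀ (pow_ne_zero b hxz)]
  have hlim :
      Tendsto (fun x => (x - z) ^ (b - a) • f x) (𝓝[≠] z) (𝓝 ((z - z) ^ (b - a) • f z)) :=
    ((((continuous_id.sub continuous_const).pow _).continuousAt).smul hf).mono_left
      nhdsWithin_le_nhds
  have hgz' := tendsto_nhds_unique (hlim.congr' hg_eq) (hg.mono_left nhdsWithin_le_nhds)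
  rcases Nat.eq_zero_or_pos (b - a) with hba | hba
  · rw [hba, pow_zero, one_smul] at hgz'
    exact ⟨by omega, hgz'⟩
  · rw [sub_self, zero_pow hba.ne', zero_smul] at hgz'
    exact absurd hgz'.symm hgz

theorem ContinuousLinearMap.IsIdempotentElem.ker_one_sub {R M : Type*} [Ring R]
    [TopologicalSpace M] [AddCommGroup M] [IsTopologicalAddGroup M] [Module R M]
    {p : M →L[R] M} (hp : IsIdempotentElem p) : (1 - p).ker = p.range := by
  simpa using (LinearMap.IsIdempotentElem.range_eq_ker_one_sub
    (ContinuousLinearMap.IsIdempotentElem.toLinearMap hp)).symm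

section StarProjection

variable {𝕜 E : Type*} [RCLike 𝕜] [NormedAddCommGroup E] [InnerProductSpace 𝕜 E]
  [CompleteSpace E]

theorem ker_mul_one_sub_eq_range {A p : E →L[𝕜] E} (hp : IsStarProjection p)
    (h : A.ker ⊓ p.rangeᗮ = ⊥) : (A * (1 - p)).ker = p.range := by
  ext v
  have hv : (1 - p) v ∈ p.rangeᗮ := by
    rw [ContinuousLinearMap.IsStarNormal.orthogonal_range hp.isStarNormal, LinearMap.mem_ker]
    change (p * (1 - p)) v = 0
    rw [hp.mul_one_sub_self]
    rfl
  rw [← ContinuousLinearMap.IsIdempotentElem.ker_one_sub hp.isIdempotentElem, LinearMap.mem_ker,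
    LinearMap.mem_ker]
  change A ((1 - p) v) = 0 ↔ (1 - p) v = 0
  exact ⟨fun hA => (Submodule.eq_bot_iff _).1 h _ ⟨hA, hv⟩, fun h0 => by rw [h0, map_zero]⟩

theorem ker_revProd_one_sub {l : ℕ} {p : Fin (l + 1) → E →L[𝕜] E}
    (hp : ∀ j, IsStarProjection (p j))
    (hmin : ∀ i j : Fin (l + 1), (i : ℕ) + 1 = j → (p j).range ⊓ (p i).rangeᗮ = ⊥) :
    (revProd fun j => 1 - p j).ker = (p 0).range := by
  induction l with
  | zero =>
    rw [revProd_succ]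
    exact ker_mul_one_sub_eq_range (hp 0) (by simp [Module.End.one_eq_id])
  | succ l ih =>
    rw [revProd_succ]
    refine ker_mul_one_sub_eq_range (hp 0) ?_
    rw [Fin.tail_def, ih (fun j => hp j.succ) fun i j hij => hmin _ _ (by simpa using hij)]
    exact hmin 0 1 rfl

end StarProjection

section Matrix

variable {n l : ℕ}

theorem mrange_eq_range_toEuclideanCLM (A : Matrix (Fin n) (Fin n) ℂ) :
    mrange A = (toEuclideanCLM (𝕜 := ℂ) A).range :=
  rfl

theorem mrange_eq_bot_iff {m : ℕ} {A : Matrix (Fin n) (Fin m) ℂ} : mrange A = ⊥ ↔ A = 0 := by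
  rw [mrange, LinearMap.range_eq_bot, ← toEuclideanLin.map_eq_zero_iff]

theorem mrange_one : mrange (1 : Matrix (Fin n) (Fin n) ℂ) = ⊤ := by
  rw [mrange_eq_range_toEuclideanCLM, map_one]
  exact LinearMap.range_id

theorem IsHermitianProj.one : IsHermitianProj (1 : Matrix (Fin n) (Fin n) ℂ) :=
  ⟨conjTranspose_one, one_mul 1⟩

theorem IsHermitianProj.isStarProjection_toEuclideanCLM {π : Matrix (Fin n) (Fin n) ℂ}
    (hπ : IsHermitianProj π) : IsStarProjection (toEuclideanCLM (𝕜 := ℂ) π) :=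
  IsStarProjection.map ⟨hπ.2, hπ.1⟩ _

theorem IsHermitianProj.eq_of_mrange_eq {π ρ : Matrix (Fin n) (Fin n) ℂ}
    (hπ : IsHermitianProj π) (hρ : IsHermitianProj ρ) (h : mrange π = mrange ρ) : π = ρ :=
  (toEuclideanCLM (𝕜 := ℂ) (n := Fin n)).injective <| ContinuousLinearMap.IsStarProjection.ext
    hπ.isStarProjection_toEuclideanCLM hρ.isStarProjection_toEuclideanCLM h

def IsMinimalFactorization (τ : Fin l → Matrix (Fin n) (Fin n) ℂ) : Prop :=
  (∀ j, IsHermitianProj (τ j) ∧ τ j ≠ 0 ∧ τ j ≠ 1) ∧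
    ∀ i j : Fin l, (i : ℕ) + 1 = j → mrange (τ j) ⊓ (mrange (τ i))ᗮ = ⊥

namespace IsMinimalFactorization

theorem tail {τ : Fin (l + 1) → Matrix (Fin n) (Fin n) ℂ} (hτ : IsMinimalFactorization τ) :
    IsMinimalFactorization (Fin.tail τ) :=
  ⟨fun j => hτ.1 j.succ, fun i j hij => hτ.2 i.succ j.succ (by simpa using hij)⟩

theorem ker_revProd_one_sub {τ : Fin (l + 1) → Matrix (Fin n) (Fin n) ℂ}
    (hτ : IsMinimalFactorization τ) :
    (toEuclideanCLM (𝕜 := ℂ) (revProd fun j => 1 - τ j)).ker = mrange (τ 0) := by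
  simp only [map_revProd, map_sub, map_one]
  exact _root_.ker_revProd_one_sub (fun j => (hτ.1 j).1.isStarProjection_toEuclideanCLM) hτ.2

theorem revProd_one_sub_ne_zero [NeZero n] {τ : Fin l → Matrix (Fin n) (Fin n) ℂ}
    (hτ : IsMinimalFactorization τ) : (revProd fun j => 1 - τ j) ≠ 0 := by
  cases l with
  | zero => simp
  | succ l =>
    intro h0
    have hrange := hτ.ker_revProd_one_sub
    rw [h0, map_zero, ContinuousLinearMap.toLinearMap_zero, LinearMap.ker_zero, ← mrange_one]
      at hrange
    exact (hτ.1 0).2.2 ((hτ.1 0).1.eq_of_mrange_eq .one hrange.symm)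

theorem revProd_one_sub_eq_one_iff {τ : Fin l → Matrix (Fin n) (Fin n) ℂ}
    (hτ : IsMinimalFactorization τ) : (revProd fun j => 1 - τ j) = 1 ↔ l = 0 := by
  cases l with
  | zero => simp
  | succ l =>
    refine iff_of_false (fun h1 => (hτ.1 0).2.1 ?_) (Nat.succ_ne_zero l)
    have hrange := hτ.ker_revProd_one_sub
    rw [h1, map_one, ContinuousLinearMap.toLinearMap_one, Module.End.one_eq_id, LinearMap.ker_id]
      at hrange
    exact mrange_eq_bot_iff.1 hrange.symm

theorem head_eq {l' : ℕ} {τ : Fin (l + 1) → Matrix (Fin n) (Fin n) ℂ}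
    {σ : Fin (l' + 1) → Matrix (Fin n) (Fin n) ℂ} (hτ : IsMinimalFactorization τ)
    (hσ : IsMinimalFactorization σ)
    (h : (revProd fun j => 1 - τ j) = revProd fun j => 1 - σ j) :
    τ 0 = σ 0 :=
  (hτ.1 0).1.eq_of_mrange_eq (hσ.1 0).1 <| by
    rw [← hτ.ker_revProd_one_sub, h, hσ.ker_revProd_one_sub]

end IsMinimalFactorization

end Matrix

section RationalFunctions

variable {n l : ℕ}

/-- `(λ - z) • g_{z,π}(λ)`, which, unlike `g_{z,π}`, is continuous at `λ = z`. -/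
def simpleEltNum (z : ℂ) (π : Matrix (Fin n) (Fin n) ℂ) (lam : ℂ) : Matrix (Fin n) (Fin n) ℂ :=
  (lam - z) • 1 + (z - conj z) • (1 - π)

def factorProd (z : ℂ) (m : ℕ) (τ : Fin l → Matrix (Fin n) (Fin n) ℂ) (lam : ℂ) :
    Matrix (Fin n) (Fin n) ℂ :=
  ((lam - conj z) / (lam - z)) ^ m • revProd fun j => simpleElt z (τ j) lam

theorem simpleElt_eq_inv_smul_simpleEltNum {z lam : ℂ} (π : Matrix (Fin n) (Fin n) ℂ)
    (h : lam ≠ z) : simpleElt z π lam = (lam - z)⁻¹ • simpleEltNum z π lam := by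
  rw [simpleElt, simpleEltNum, smul_add, smul_smul, smul_smul,
    inv_mul_cancel₀ (sub_ne_zero.2 h), one_smul, div_eq_inv_mul]

theorem simpleEltNum_self (z : ℂ) (π : Matrix (Fin n) (Fin n) ℂ) :
    simpleEltNum z π z = (z - conj z) • (1 - π) := by
  rw [simpleEltNum, sub_self, zero_smul, zero_add]

theorem continuous_simpleEltNum (z : ℂ) (π : Matrix (Fin n) (Fin n) ℂ) :
    Continuous (simpleEltNum z π) :=
  ((continuous_id.sub continuous_const).smul continuous_const).add continuous_const

def factorProdNum (z : ℂ) (m : ℕ) (τ : Fin l → Matrix (Fin n) (Fin n) ℂ) (lam : ℂ) :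
    Matrix (Fin n) (Fin n) ℂ :=
  (lam - conj z) ^ m • revProd fun j => simpleEltNum z (τ j) lam

theorem continuous_factorProdNum (z : ℂ) (m : ℕ) (τ : Fin l → Matrix (Fin n) (Fin n) ℂ) :
    Continuous (factorProdNum z m τ) :=
  ((continuous_id.sub continuous_const).pow m).smul
    (continuous_revProd fun j => continuous_simpleEltNum z (τ j))

theorem factorProdNum_self (z : ℂ) (m : ℕ) (τ : Fin l → Matrix (Fin n) (Fin n) ℂ) :
    factorProdNum z m τ z = (z - conj z) ^ (m + l) • revProd fun j => 1 - τ j := by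
  simp only [factorProdNum, simpleEltNum_self, revProd_smul, smul_smul, pow_add]

theorem factorProd_eq {z lam : ℂ} (m : ℕ) (τ : Fin l → Matrix (Fin n) (Fin n) ℂ)
    (h : lam ≠ z) :
    factorProd z m τ lam = ((lam - z) ^ (m + l))⁻¹ • factorProdNum z m τ lam := by
  simp only [factorProd, factorProdNum, simpleElt_eq_inv_smul_simpleEltNum _ h, revProd_smul,
    smul_smul, div_pow]
  congr 1
  ring

theorem simpleElt_mul_simpleElt_conj {z lam : ℂ} {π : Matrix (Fin n) (Fin n) ℂ}
    (hπ : π * π = π) (hz : lam ≠ z) (hz' : lam ≠ conj z) :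
    simpleElt z π lam * simpleElt (conj z) π lam = 1 := by
  have hπ' : (1 - π) * (1 - π) = 1 - π := (IsIdempotentElem.one_sub hπ).eq
  simp only [simpleElt, Complex.conj_conj, add_mul, mul_add, one_mul, mul_one,
    smul_mul_smul_comm, hπ', add_assoc, ← add_smul]
  rw [add_eq_left, ← zero_smul ℂ (1 - π)]
  congr 1
  field_simp [sub_ne_zero.2 hz, sub_ne_zero.2 hz']
  ring

theorem factorProd_mul_simpleElt_conj {z lam : ℂ} (m : ℕ)
    {τ : Fin (l + 1) → Matrix (Fin n) (Fin n) ℂ} (hτ : τ 0 * τ 0 = τ 0) (hz : lam ≠ z)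
    (hz' : lam ≠ conj z) :
    factorProd z m τ lam * simpleElt (conj z) (τ 0) lam = factorProd z m (Fin.tail τ) lam := by
  rw [factorProd, revProd_succ, smul_mul_assoc, mul_assoc,
    simpleElt_mul_simpleElt_conj hτ hz hz', mul_one]
  rfl

theorem add_eq_add_and_revProd_eq_of_factorProd_eq {z : ℂ} (hz : z.im ≠ 0) {m m' l' : ℕ}
    {τ : Fin l → Matrix (Fin n) (Fin n) ℂ} {σ : Fin l' → Matrix (Fin n) (Fin n) ℂ}
    (hτ : (revProd fun j => 1 - τ j) ≠ 0) (hσ : (revProd fun j => 1 - σ j) ≠ 0)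
    (heq : ∀ lam, lam ≠ z → lam ≠ conj z → factorProd z m τ lam = factorProd z m' σ lam) :
    m + l = m' + l' ∧ (revProd fun j => 1 - τ j) = revProd fun j => 1 - σ j := by
  have hzc : z ≠ conj z := fun h => hz (conj_eq_iff_im.1 h.symm)
  have hw : z - conj z ≠ 0 := sub_ne_zero.2 hzc
  obtain ⟨hml, hval⟩ := eq_of_inv_pow_smul_eventuallyEq
    (continuous_factorProdNum z m τ).continuousAt (continuous_factorProdNum z m' σ).continuousAt
    (by rw [factorProdNum_self]; exact smul_ne_zero (pow_ne_zero _ hw) hτ)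
    (by rw [factorProdNum_self]; exact smul_ne_zero (pow_ne_zero _ hw) hσ)
    (by
      filter_upwards [self_mem_nhdsWithin, nhdsWithin_le_nhds (eventually_ne_nhds hzc)]
        with lam h1 h2
      rw [← factorProd_eq _ _ h1, ← factorProd_eq _ _ h1]
      exact heq lam h1 h2)
  rw [factorProdNum_self, factorProdNum_self, ← hml] at hval
  exact ⟨hml, smul_right_injective _ (pow_ne_zero _ hw) hval⟩

end RationalFunctions

theorem IsMinimalFactorization.eq_of_factorProd_eq {n l : ℕ} [NeZero n] {z : ℂ}
    (hz : z.im ≠ 0) {m m' l' : ℕ} {τ : Fin l → Matrix (Fin n) (Fin n) ℂ}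
    {σ : Fin l' → Matrix (Fin n) (Fin n) ℂ}
    (hτ : IsMinimalFactorization τ) (hσ : IsMinimalFactorization σ)
    (heq : ∀ lam, lam ≠ z → lam ≠ conj z → factorProd z m τ lam = factorProd z m' σ lam) :
    m = m' ∧ ∃ h : l = l', ∀ j, τ j = σ (Fin.cast h j) := by
  induction l generalizing l' m m' with
  | zero =>
    obtain ⟨hml, hT⟩ := add_eq_add_and_revProd_eq_of_factorProd_eq hz
      hτ.revProd_one_sub_ne_zero hσ.revProd_one_sub_ne_zero heq
    obtain rfl : l' = 0 := hσ.revProd_one_sub_eq_one_iff.1 (hT.symm.trans (revProd_zero _))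
    exact ⟨by omega, rfl, fun j => j.elim0⟩
  | succ l ih =>
    obtain ⟨hml, hT⟩ := add_eq_add_and_revProd_eq_of_factorProd_eq hz
      hτ.revProd_one_sub_ne_zero hσ.revProd_one_sub_ne_zero heq
    cases l' with
    | zero => exact absurd (hτ.revProd_one_sub_eq_one_iff.1 hT) l.succ_ne_zero
    | succ l' =>
      have h0 : τ 0 = σ 0 := hτ.head_eq hσ hT
      have heq_tail : ∀ lam, lam ≠ z → lam ≠ conj z →
          factorProd z m (Fin.tail τ) lam = factorProd z m' (Fin.tail σ) lam := by
        intro lam h1 h2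
        rw [← factorProd_mul_simpleElt_conj m (hτ.1 0).1.2 h1 h2,
          ← factorProd_mul_simpleElt_conj m' (hσ.1 0).1.2 h1 h2, heq lam h1 h2, h0]
      obtain ⟨rfl, rfl, htail⟩ := ih hτ.tail hσ.tail heq_tail
      exact ⟨rfl, rfl, Fin.cases h0 htail⟩

/-- Uniqueness of the minimal factorization (Theorem 4.11, uniqueness part). -/
theorem statement8 {n : ℕ} (hn : 1 ≤ n) (z : ℂ) (hz : z.im ≠ 0)
    {m m' l l' : ℕ}
    (τ : Fin l → Matrix (Fin n) (Fin n) ℂ) (σ : Fin l' → Matrix (Fin n) (Fin n) ℂ)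
    (hτ : ∀ j, IsHermitianProj (τ j) ∧ τ j ≠ 0 ∧ τ j ≠ 1)
    (hσ : ∀ j, IsHermitianProj (σ j) ∧ σ j ≠ 0 ∧ σ j ≠ 1)
    (hminτ : ∀ i j : Fin l, (i : ℕ) + 1 = (j : ℕ) →
      mrange (τ j) ⊓ (mrange (τ i))ᗮ = ⊥)
    (hminσ : ∀ i j : Fin l', (i : ℕ) + 1 = (j : ℕ) →
      mrange (σ j) ⊓ (mrange (σ i))ᗮ = ⊥)
    (heq : ∀ lam : ℂ, lam ≠ z → lam ≠ (starRingEnd ℂ) z →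
      ((lam - (starRingEnd ℂ) z) / (lam - z)) ^ m •
          (List.ofFn fun j : Fin l => simpleElt z (τ j) lam).reverse.prod
        = ((lam - (starRingEnd ℂ) z) / (lam - z)) ^ m' •
            (List.ofFn fun j : Fin l' => simpleElt z (σ j) lam).reverse.prod) :
    m = m' ∧ ∃ h : l = l', ∀ j : Fin l, τ j = σ (Fin.cast h j) :=
  have : NeZero n := ⟨by omega⟩
  IsMinimalFactorization.eq_of_factorProd_eq hz ⟨hτ, hminτ⟩ ⟨hσ, hminσ⟩ heq
end
end

section
/- Let n ≥ 1, z ∈ ℂ∖ℝ, and let π₁, …, π_k be Hermitian projections of ℂⁿ. For 1 ≤ j ≤ k set P_{k,j} = Σ_{k ≥ i₁ > i₂ > ⋯ > i_j ≥ 1} π_{i₁}^⊥ · π_{i₂}^⊥ ⋯ π_{i_j}^⊥ (the sum over all strictly decreasing j-tuples of indices in {1,…,k}). Then for every λ ∈ ℂ∖{z}: g_{z,π_k}(λ)·g_{z,π_{k−1}}(λ)⋯g_{z,π_1}(λ) = I + Σ_{j=1}^k ((z − conj(z))/(λ − z))^j · P_{k,j}. -/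
open Matrix Complex Filter

noncomputable section

/-!
Every factor is `1 + c • (1 - π i)` with the same scalar `c = (z - conj z) / (λ - z)`, so
expanding the ordered product of binomials in the (noncommutative) matrix ring gives a sum over
subsets of indices of the products taken in decreasing index order; pulling `c ^ #s` out of each
product and grouping the subsets by cardinality yields the formula, the empty subset giving `1`.
-/

theorem Finset.prod_sort_reverse_map_one_add {α M : Type*} [LinearOrder α] [Semiring M]
    (r : α → M) (s : Finset α) :
    ((s.sort (· ≤ ·)).reverse.map (fun i => 1 + r i)).prod
      = ∑ t ∈ s.powerset, ((t.sort (· ≤ ·)).reverse.map r).prod := by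
  induction s using Finset.induction_on_min with
  | empty => simp
  | insert a s ha ih =>
    have has : a ∉ s := fun h => lt_irrefl a (ha a h)
    have sort_insert : ∀ t ⊆ s, ((insert a t).sort (· ≤ ·)).reverse
        = (t.sort (· ≤ ·)).reverse ++ [a] := fun t ht => by
      rw [Finset.sort_insert _ (fun b hb => (ha b (ht hb)).le) (fun h => has (ht h))]
      simp
    have prod_insert : ∀ t ∈ s.powerset, (((insert a t).sort (· ≤ ·)).reverse.map r).prod
        = ((t.sort (· ≤ ·)).reverse.map r).prod * r a := fun t ht => by
      rw [sort_insert t (Finset.mem_powerset.mp ht), List.map_append, List.prod_append,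
        List.map_singleton, List.prod_singleton]
    rw [sort_insert s subset_rfl, Finset.sum_powerset_insert has, Finset.sum_congr rfl prod_insert,
      ← Finset.sum_mul, ← ih]
    simp [mul_add]

theorem List.prod_map_smul {ι R A : Type*} [CommSemiring R] [Semiring A] [Algebra R A]
    (c : R) (q : ι → A) (l : List ι) :
    (l.map fun i => c • q i).prod = c ^ l.length • (l.map q).prod := by
  induction l with
  | nil => simp
  | cons a l ih => rw [map_cons, prod_cons, ih, smul_mul_smul_comm, length_cons, pow_succ']; rfl

theorem Finset.sum_powerset_pow_card_smul {α R M : Type*} [Monoid R] [AddCommMonoid M]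
    [DistribMulAction R M] (c : R) (f : Finset α → M) (s : Finset α) :
    ∑ t ∈ s.powerset, c ^ t.card • f t
      = ∑ j ∈ range (s.card + 1), c ^ j • ∑ t ∈ s.powerset with t.card = j, f t := by
  rw [← sum_fiberwise_of_maps_to fun t ht =>
    mem_range_succ_iff.mpr (card_le_card (mem_powerset.mp ht))]
  refine sum_congr rfl fun j _ => ?_
  rw [smul_sum]
  exact sum_congr rfl fun t ht => by rw [(mem_filter.mp ht).2]

theorem statement9_general {n k : ℕ} (z : ℂ)
    (π : Fin k → Matrix (Fin n) (Fin n) ℂ)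
    (lam : ℂ) :
    (List.ofFn fun i : Fin k => simpleElt z (π i) lam).reverse.prod
      = 1 + ∑ j ∈ Finset.Icc 1 k,
          ((z - (starRingEnd ℂ) z) / (lam - z)) ^ j •
            ∑ s ∈ Finset.univ.filter (fun s : Finset (Fin k) => s.card = j),
              ((s.sort (· ≤ ·)).reverse.map
                fun i => (1 : Matrix (Fin n) (Fin n) ℂ) - π i).prod := by
  set c : ℂ := (z - (starRingEnd ℂ) z) / (lam - z)
  have ofFn_eq : (List.ofFn fun i : Fin k => simpleElt z (π i) lam)
      = (Finset.univ.sort (· ≤ ·)).map fun i => 1 + c • (1 - π i) := by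
    rw [Fin.sort_univ, List.ofFn_eq_map]
    rfl
  rw [ofFn_eq, ← List.map_reverse, Finset.prod_sort_reverse_map_one_add]
  simp_rw [List.prod_map_smul, List.length_reverse, Finset.length_sort]
  rw [Finset.sum_powerset_pow_card_smul, Finset.card_univ, Fintype.card_fin,
    Nat.range_succ_eq_Icc_zero, ← Finset.insert_Icc_add_one_left_eq_Icc k.zero_le,
    Finset.sum_insert (by simp)]
  simp [Finset.powerset_univ, Finset.filter_eq']

/-- Laurent expansion of a product of simple elements with the same pole:
g_{z,π_k}⋯g_{z,π_1} = I + Σ_{j=1}^k ((z − conj z)/(λ − z))^j P_{k,j}, where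
P_{k,j} = Σ_{k ≥ i₁ > ⋯ > i_j ≥ 1} π_{i₁}^⊥ ⋯ π_{i_j}^⊥ (the product taken with strictly
decreasing indices, i.e. over subsets of cardinality j listed in decreasing order). -/
theorem statement9 {n k : ℕ} (hn : 1 ≤ n) (z : ℂ) (hz : z.im ≠ 0)
    (π : Fin k → Matrix (Fin n) (Fin n) ℂ)
    (hπ : ∀ i, IsHermitianProj (π i))
    (lam : ℂ) (hlam : lam ≠ z) :
    (List.ofFn fun i : Fin k => simpleElt z (π i) lam).reverse.prod
      = 1 + ∑ j ∈ Finset.Icc 1 k,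
          ((z - (starRingEnd ℂ) z) / (lam - z)) ^ j •
            ∑ s ∈ Finset.univ.filter (fun s : Finset (Fin k) => s.card = j),
              ((s.sort (· ≤ ·)).reverse.map
                fun i => (1 : Matrix (Fin n) (Fin n) ℂ) - π i).prod :=
  statement9_general z π lam
end
end

section
/- Let n ≥ 1, z ∈ ℂ∖ℝ, and let U ⊆ ℂ be open with z ∈ U and conj(z) ∈ U. Suppose φ̃, φ̂ : ℂ∖{z} → Mₙ(ℂ) are holomorphic, each satisfies the reality condition φ(conj(λ))* φ(λ) = I for all λ ∉ {z, conj(z)}, and each tends to the identity matrix as |λ| → ∞. Suppose ψ̃, ψ̂ : U → Mₙ(ℂ) are holomorphic, ψ̃(λ) is invertible for every λ ∈ U, and ψ̂(λ)·ψ̃(λ)⁻¹ = φ̂(λ)·φ̃(λ)⁻¹ for all λ ∈ U∖{z, conj(z)}. Then φ̂(λ) = φ̃(λ) for all λ ∈ ℂ∖{z}, and ψ̂(λ) = ψ̃(λ) for all λ ∈ U. -/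
open Matrix Complex Filter

noncomputable section

/-!
On `S = ℂ ∖ {z, z̄}` the reality condition makes `φ̃` invertible, so `φ̂ φ̃⁻¹` is holomorphic on `S`,
while `ψ̂ ψ̃⁻¹` is holomorphic on `U`. The two agree on `S ∩ U` and `S ∪ U = ℂ`, so they glue to an
entire function, which tends to `I` at infinity and is therefore `I` by Liouville's theorem.
Hence `φ̂ = φ̃` on `S` (and, by continuity, at `z̄`) and `ψ̂ = ψ̃` on `U`.
-/

-- The operator norm makes square matrices a normed algebra whose topology is, definitionally,
-- the entrywise one.
open scoped Matrix.Norms.Operator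

theorem Matrix.differentiableOn_of_entries {𝕜 E : Type*} [NontriviallyNormedField 𝕜]
    [NormedAddCommGroup E] [NormedSpace 𝕜 E] {m n : Type*} [Fintype m] [Fintype n] {s : Set E}
    {f : E → Matrix m n 𝕜} (h : ∀ i j, DifferentiableOn 𝕜 (fun x => f x i j) s) :
    DifferentiableOn 𝕜 f s := by
  classical
  have hf : f = fun x => ∑ i, ∑ j, f x i j • Matrix.single i j (1 : 𝕜) := by
    funext x
    simp only [Matrix.smul_single, smul_eq_mul, mul_one]
    exact Matrix.matrix_eq_sum_single (f x)
  rw [hf]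
  exact DifferentiableOn.fun_sum fun i _ => DifferentiableOn.fun_sum fun j _ =>
    (h i j).smul_const _

theorem Matrix.tendsto_of_entries {α 𝕜 m n : Type*} [TopologicalSpace 𝕜] {l : Filter α}
    {f : α → Matrix m n 𝕜} {A : Matrix m n 𝕜}
    (h : ∀ i j, Tendsto (fun x => f x i j) l (nhds (A i j))) : Tendsto f l (nhds A) :=
  tendsto_pi_nhds.2 fun i => tendsto_pi_nhds.2 (h i)

theorem DifferentiableOn.matrix_inv {𝕜 E : Type*} [RCLike 𝕜] [NormedAddCommGroup E]
    [NormedSpace 𝕜 E] {n : Type*} [Fintype n] [DecidableEq n] {s : Set E} {f : E → Matrix n n 𝕜}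
    (hf : DifferentiableOn 𝕜 f s) (hunit : ∀ x ∈ s, IsUnit (f x)) :
    DifferentiableOn 𝕜 (fun x => (f x)⁻¹) s := by
  simp only [Matrix.nonsing_inv_eq_ringInverse]
  exact hf.inverse hunit

theorem Filter.Tendsto.matrix_inv_one {α 𝕜 n : Type*} [NontriviallyNormedField 𝕜] [Fintype n]
    [DecidableEq n] {l : Filter α} {f : α → Matrix n n 𝕜} (hf : Tendsto f l (nhds 1)) :
    Tendsto (fun x => (f x)⁻¹) l (nhds 1) := by
  have h := (continuousAt_matrix_inv (1 : Matrix n n 𝕜) (by simp [Ring.inverse_eq_inv'])).tendsto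
  rw [inv_one] at h
  exact h.comp hf

theorem Matrix.eq_of_mul_inv_eq_one {K n : Type*} [Field K] [Fintype n] [DecidableEq n]
    {A B : Matrix n n K} (hB : IsUnit B) (h : A * B⁻¹ = 1) : A = B := by
  rw [← Matrix.nonsing_inv_mul_cancel_right (A := B) A ((Matrix.isUnit_iff_isUnit_det B).mp hB),
    h, one_mul]

section Gluing

variable {E F : Type*} [NormedAddCommGroup E] [NormedAddCommGroup F] {s t : Set E} {f g : E → F}

theorem exists_differentiable_eqOn_of_eqOn_inter {𝕜 : Type*} [NontriviallyNormedField 𝕜]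
    [NormedSpace 𝕜 E] [NormedSpace 𝕜 F] (hs : IsOpen s) (ht : IsOpen t) (hst : s ∪ t = Set.univ)
    (hf : DifferentiableOn 𝕜 f s) (hg : DifferentiableOn 𝕜 g t) (hfg : Set.EqOn f g (s ∩ t)) :
    ∃ G : E → F, Differentiable 𝕜 G ∧ Set.EqOn G f s ∧ Set.EqOn G g t := by
  classical
  have hGf : Set.EqOn (s.piecewise f g) f s := fun x hx => s.piecewise_eq_of_mem f g hx
  have hGg : Set.EqOn (s.piecewise f g) g t := fun x hx => by
    by_cases hxs : x ∈ s
    · rw [s.piecewise_eq_of_mem f g hxs, hfg ⟨hxs, hx⟩]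
    · exact s.piecewise_eq_of_notMem f g hxs
  exact ⟨s.piecewise f g,
    differentiable_of_differentiableOn_union_of_isOpen (hf.congr hGf) (hg.congr hGg) hst hs ht,
    hGf, hGg⟩

theorem eqOn_const_of_differentiableOn_union_of_tendsto_cocompact [NormedSpace ℂ E]
    [Nontrivial E] [NormedSpace ℂ F] (hs : IsOpen s) (ht : IsOpen t) (hst : s ∪ t = Set.univ)
    (hsc : s ∈ cocompact E) (hf : DifferentiableOn ℂ f s) (hg : DifferentiableOn ℂ g t)
    (hfg : Set.EqOn f g (s ∩ t)) {c : F} (hlim : Tendsto f (cocompact E) (nhds c)) :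
    Set.EqOn f (fun _ => c) s ∧ Set.EqOn g (fun _ => c) t := by
  obtain ⟨G, hG, hGf, hGg⟩ := exists_differentiable_eqOn_of_eqOn_inter hs ht hst hf hg hfg
  have hGc : G = fun _ => c :=
    hG.eq_const_of_tendsto_cocompact (hlim.congr' (eventuallyEq_of_mem hsc hGf.symm))
  exact ⟨fun x hx => (hGf hx).symm.trans (congrFun hGc x),
    fun x hx => (hGg hx).symm.trans (congrFun hGc x)⟩

end Gluing

theorem statement12_general {n : ℕ} (z : ℂ)
    (U : Set ℂ) (hU : IsOpen U) (hzU : z ∈ U) (hzcU : (starRingEnd ℂ) z ∈ U)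
    (φt φh : ℂ → Matrix (Fin n) (Fin n) ℂ)
    (hφthol : ∀ i j, DifferentiableOn ℂ (fun lam => φt lam i j) {z}ᶜ)
    (hφhhol : ∀ i j, DifferentiableOn ℂ (fun lam => φh lam i j) {z}ᶜ)
    (hφtreal : ∀ lam : ℂ, lam ≠ z → lam ≠ (starRingEnd ℂ) z →
      (φt ((starRingEnd ℂ) lam))ᴴ * φt lam = 1)
    (hφtinf : ∀ i j, Filter.Tendsto (fun lam => φt lam i j) (Filter.cocompact ℂ)
      (nhds ((1 : Matrix (Fin n) (Fin n) ℂ) i j)))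
    (hφhinf : ∀ i j, Filter.Tendsto (fun lam => φh lam i j) (Filter.cocompact ℂ)
      (nhds ((1 : Matrix (Fin n) (Fin n) ℂ) i j)))
    (ψt ψh : ℂ → Matrix (Fin n) (Fin n) ℂ)
    (hψthol : ∀ i j, DifferentiableOn ℂ (fun lam => ψt lam i j) U)
    (hψhhol : ∀ i j, DifferentiableOn ℂ (fun lam => ψh lam i j) U)
    (hψtinv : ∀ lam ∈ U, IsUnit (ψt lam))
    (heq : ∀ lam ∈ U, lam ≠ z → lam ≠ (starRingEnd ℂ) z →
      ψh lam * (ψt lam)⁻¹ = φh lam * (φt lam)⁻¹) :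
    (∀ lam : ℂ, lam ≠ z → φh lam = φt lam) ∧ (∀ lam ∈ U, ψh lam = ψt lam) := by
  set S : Set ℂ := {z, (starRingEnd ℂ) z}ᶜ with hS_def
  have hmemS : ∀ {l}, l ∈ S ↔ l ≠ z ∧ l ≠ (starRingEnd ℂ) z := by simp [hS_def, not_or]
  have hSz : S ⊆ {z}ᶜ := fun l hl => (hmemS.mp hl).1
  have hSU : S ∪ U = Set.univ :=
    Set.compl_subset_iff_union.mp (by rw [compl_compl]; exact Set.pair_subset hzU hzcU)
  have hφt_unit : ∀ l ∈ S, IsUnit (φt l) := fun l hl =>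
    (Matrix.isUnit_iff_isUnit_det _).mpr
      (Matrix.isUnit_det_of_left_inverse (hφtreal l (hmemS.mp hl).1 (hmemS.mp hl).2))
  have hφh := Matrix.differentiableOn_of_entries hφhhol
  have hφt := Matrix.differentiableOn_of_entries hφthol
  have hφ_quot : DifferentiableOn ℂ (fun l => φh l * (φt l)⁻¹) S :=
    (hφh.mono hSz).mul ((hφt.mono hSz).matrix_inv hφt_unit)
  have hψ_quot : DifferentiableOn ℂ (fun l => ψh l * (ψt l)⁻¹) U :=
    (Matrix.differentiableOn_of_entries hψhhol).mul
      ((Matrix.differentiableOn_of_entries hψthol).matrix_inv hψtinv)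
  have hlim : Tendsto (fun l => φh l * (φt l)⁻¹) (cocompact ℂ) (nhds 1) := by
    simpa using
      (Matrix.tendsto_of_entries hφhinf).mul (Matrix.tendsto_of_entries hφtinf).matrix_inv_one
  obtain ⟨hφ_one, hψ_one⟩ := eqOn_const_of_differentiableOn_union_of_tendsto_cocompact
    (Set.toFinite _).isClosed.isOpen_compl hU hSU (Set.toFinite _).isCompact.compl_mem_cocompact
    hφ_quot hψ_quot (fun l hl => (heq l hl.2 (hmemS.mp hl.1).1 (hmemS.mp hl.1).2).symm) hlim
  have hφS : Set.EqOn φh φt S := fun l hl => Matrix.eq_of_mul_inv_eq_one (hφt_unit l hl) (hφ_one hl)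
  have hS_dense : Dense S := (Set.toFinite _).countable.dense_compl ℂ
  refine ⟨fun l hl => ?_, fun l hl => Matrix.eq_of_mul_inv_eq_one (hψtinv l hl) (hψ_one hl)⟩
  exact hφS.of_subset_closure hφh.continuousOn hφt.continuousOn hSz
    (by rw [hS_dense.closure_eq]; exact Set.subset_univ _) hl

/-- Uniqueness step in Theorem 6.1: if φ̃, φ̂ are holomorphic on ℂ∖{z}, satisfy the reality
condition off {z, conj z}, tend to I at ∞, and ψ̃, ψ̂ are holomorphic on U with ψ̃
invertible, then ψ̂ψ̃⁻¹ = φ̂φ̃⁻¹ on U∖{z, conj z} forces φ̂ = φ̃ and ψ̂ = ψ̃. -/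
theorem statement12 {n : ℕ} (hn : 1 ≤ n) (z : ℂ) (hz : z.im ≠ 0)
    (U : Set ℂ) (hU : IsOpen U) (hzU : z ∈ U) (hzcU : (starRingEnd ℂ) z ∈ U)
    (φt φh : ℂ → Matrix (Fin n) (Fin n) ℂ)
    (hφthol : ∀ i j, DifferentiableOn ℂ (fun lam => φt lam i j) {z}ᶜ)
    (hφhhol : ∀ i j, DifferentiableOn ℂ (fun lam => φh lam i j) {z}ᶜ)
    (hφtreal : ∀ lam : ℂ, lam ≠ z → lam ≠ (starRingEnd ℂ) z →
      (φt ((starRingEnd ℂ) lam))ᴴ * φt lam = 1)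
    (hφhreal : ∀ lam : ℂ, lam ≠ z → lam ≠ (starRingEnd ℂ) z →
      (φh ((starRingEnd ℂ) lam))ᴴ * φh lam = 1)
    (hφtinf : ∀ i j, Filter.Tendsto (fun lam => φt lam i j) (Filter.cocompact ℂ)
      (nhds ((1 : Matrix (Fin n) (Fin n) ℂ) i j)))
    (hφhinf : ∀ i j, Filter.Tendsto (fun lam => φh lam i j) (Filter.cocompact ℂ)
      (nhds ((1 : Matrix (Fin n) (Fin n) ℂ) i j)))
    (ψt ψh : ℂ → Matrix (Fin n) (Fin n) ℂ)
    (hψthol : ∀ i j, DifferentiableOn ℂ (fun lam => ψt lam i j) U)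
    (hψhhol : ∀ i j, DifferentiableOn ℂ (fun lam => ψh lam i j) U)
    (hψtinv : ∀ lam ∈ U, IsUnit (ψt lam))
    (heq : ∀ lam ∈ U, lam ≠ z → lam ≠ (starRingEnd ℂ) z →
      ψh lam * (ψt lam)⁻¹ = φh lam * (φt lam)⁻¹) :
    (∀ lam : ℂ, lam ≠ z → φh lam = φt lam) ∧ (∀ lam ∈ U, ψh lam = ψt lam) :=
  statement12_general z U hU hzU hzcU φt φh hφthol hφhhol hφtreal hφtinf hφhinf ψt ψh hψthol hψhhol
    hψtinv heq
end
end

section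
/- Let n ≥ 1, z ∈ ℂ∖ℝ, and let Ω ⊆ ℂ be open with z ∈ Ω. Let ψ : ℝ³ × Ω → Mₙ(ℂ) be pointwise invertible and continuously differentiable in (x,u,v), and let A, B : ℝ³ → Mₙ(ℂ) take skew-Hermitian values (A* = −A, B* = −B) and satisfy λ∂_xψ − ∂_uψ = Aψ and λ∂_vψ − ∂_xψ = Bψ for all λ ∈ Ω. Let π : ℝ³ → Mₙ(ℂ) be a continuously differentiable family of Hermitian projections. Then the following are equivalent: (i) there exist Ã, B̃ : ℝ³ → Mₙ(ℂ) such that ψ₁(p, λ) := g_{z,π(p)}(λ)·ψ(p, λ) satisfies λ∂_xψ₁ − ∂_uψ₁ = Ãψ₁ and λ∂_vψ₁ − ∂_xψ₁ = B̃ψ₁ for all λ ∈ Ω∖{z}; (ii) π satisfies the analytic Bäcklund transformation equations π^⊥(z∂_xπ − ∂_uπ − Aπ) = 0 and π^⊥(z∂_vπ − ∂_xπ − Bπ) = 0 everywhere on ℝ³. -/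
/-!
Write `g = g_{z,π}(λ)`, `c = z - conj z`, and let `(a, b, S)` be `(x, u, A)` or `(v, x, B)`.
By the Leibniz rule and the Lax equations for `ψ`,
`λ ∂ₐ(gψ) - ∂_b(gψ) = (-(c/(λ-z)) (λ ∂ₐπ - ∂_bπ) + g S) ψ`, so as `ψ` is invertible the dressed
equation with coefficient `M` says `M g = -(c/(λ-z)) (λ ∂ₐπ - ∂_bπ) + g S`. Multiplied by `λ - z`
this is affine in `λ`, and `Ω ∖ {z}` has two points; so it holds for all `λ` iff `M = S - c ∂ₐπ`
and the residual `(S - c ∂ₐπ) π^⊥ + z ∂ₐπ - ∂_bπ - π^⊥ S` vanishes.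

The derivatives of `π` are self-adjoint with `∂π = ∂π π + π ∂π`, and `S` is skew-Hermitian.
With `N = z ∂ₐπ - ∂_bπ - S π` the residual is `N + π S - c π ∂ₐπ`, so `π^⊥` times it is `π^⊥ N`;
conversely, if `π^⊥ N = 0` the residual equals `(π^⊥ N)ᴴ`.
-/

open Matrix Complex Filter

noncomputable section

/-- Entrywise partial derivative ∂_x of a matrix-valued map on ℝ³, p = (x,u,v). -/
def pdx {m k : Type*} (F : ℝ × ℝ × ℝ → Matrix m k ℂ) (p : ℝ × ℝ × ℝ) : Matrix m k ℂ :=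
  fun i j => deriv (fun s => F (s, p.2.1, p.2.2) i j) p.1

/-- Entrywise partial derivative ∂_u of a matrix-valued map on ℝ³, p = (x,u,v). -/
def pdu {m k : Type*} (F : ℝ × ℝ × ℝ → Matrix m k ℂ) (p : ℝ × ℝ × ℝ) : Matrix m k ℂ :=
  fun i j => deriv (fun s => F (p.1, s, p.2.2) i j) p.2.1

/-- Entrywise partial derivative ∂_v of a matrix-valued map on ℝ³, p = (x,u,v). -/
def pdv {m k : Type*} (F : ℝ × ℝ × ℝ → Matrix m k ℂ) (p : ℝ × ℝ × ℝ) : Matrix m k ℂ :=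
  fun i j => deriv (fun s => F (p.1, p.2.1, s) i j) p.2.2

open scoped ComplexConjugate

/-- Tangent vectors at `P` to the manifold of star projections, i.e. derivatives of curves of
star projections through `P`. -/
def IsGrassmannTangent {R : Type*} [Ring R] [Star R] (P D : R) : Prop :=
  IsSelfAdjoint D ∧ D * (1 - P) = P * D

section StarAlgebra

variable {R : Type*} [Ring R] [StarRing R] [Algebra ℂ R] [StarModule ℂ R]

theorem backlund_residual_eq_zero_iff {z : ℂ} {P D₁ D₂ S : R} (hP : IsStarProjection P)
    (hD₁ : IsGrassmannTangent P D₁) (hD₂ : IsGrassmannTangent P D₂) (hS : star S = -S) :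
    (S - (z - conj z) • D₁) * (1 - P) + z • D₁ - D₂ - (1 - P) * S = 0 ↔
      (1 - P) * (z • D₁ - D₂ - S * P) = 0 := by
  set N := z • D₁ - D₂ - S * P with hN
  have hPP : P * P = P := hP.isIdempotentElem
  have hQP : (1 - P) * P = 0 := by rw [sub_mul, one_mul, hPP, sub_self]
  have hres : (S - (z - conj z) • D₁) * (1 - P) + z • D₁ - D₂ - (1 - P) * S
      = N + P * S - (z - conj z) • (P * D₁) := by
    rw [sub_mul, smul_mul_assoc, hD₁.2, hN]
    simp only [mul_sub, sub_mul, mul_one, one_mul]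
    abel
  rw [hres]
  constructor
  · intro h
    calc (1 - P) * N = (1 - P) * (N + P * S - (z - conj z) • (P * D₁)) := by
          simp only [mul_add, mul_sub, mul_smul_comm, ← mul_assoc, hQP, zero_mul, smul_zero,
            add_zero, sub_zero]
      _ = 0 := by rw [h, mul_zero]
  · intro h
    have hPN : P * N = N := by rw [sub_mul, one_mul, sub_eq_zero] at h; exact h.symm
    have hstarN : star N = conj z • D₁ - D₂ + P * S := by
      rw [hN, star_sub, star_sub, star_smul, star_mul, hD₁.1.star_eq, hD₂.1.star_eq,
        hP.isSelfAdjoint.star_eq, hS, mul_neg, sub_neg_eq_add]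
      rfl
    calc N + P * S - (z - conj z) • (P * D₁)
        = P * (conj z • D₁ - D₂ + S * (1 - P)) := by
          rw [← hPN, hN]
          simp only [mul_add, mul_sub, mul_one, mul_smul_comm, ← mul_assoc]
          module
      _ = star N * (1 - P) := by
          rw [hstarN, mul_add, mul_sub, mul_smul_comm, ← hD₁.2, ← hD₂.2, ← mul_assoc, add_mul,
            sub_mul, smul_mul_assoc]
      _ = star ((1 - P) * N) := by
          rw [star_mul, star_sub 1 P, star_one, hP.isSelfAdjoint.star_eq]
      _ = 0 := by rw [h, star_zero]

end StarAlgebra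

section LaxEquation

variable {R : Type*} [Ring R] [Algebra ℂ R]

theorem lax_mul_eq_iff {lam k : ℂ} {g Ψ Ψa Ψb Da Db S M : R} (hΨ : IsUnit Ψ)
    (hS : lam • Ψa - Ψb = S * Ψ) :
    lam • ((k • Da) * Ψ + g * Ψa) - ((k • Db) * Ψ + g * Ψb) = M * (g * Ψ) ↔
      M * g = k • (lam • Da - Db) + g * S := by
  have h : lam • ((k • Da) * Ψ + g * Ψa) - ((k • Db) * Ψ + g * Ψb)
      = (k • (lam • Da - Db) + g * S) * Ψ := by
    rw [add_mul, mul_assoc, ← hS, mul_sub, mul_smul_comm]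
    simp only [smul_add, smul_sub, sub_mul, smul_mul_assoc, smul_smul]
    module
  rw [h, ← mul_assoc, hΨ.mul_left_inj, eq_comm]

end LaxEquation

section DressingFactor

variable {n : ℕ} {z lam : ℂ} {P M S D₁ D₂ : Matrix (Fin n) (Fin n) ℂ}

theorem smul_mul_simpleElt_sub_eq (hlam : lam ≠ z) :
    (lam - z) • (M * simpleElt z P lam
        - ((-((z - conj z) / (lam - z))) • (lam • D₁ - D₂) + simpleElt z P lam * S))
      = (lam - z) • (M - (S - (z - conj z) • D₁))
        + (z - conj z) • (M * (1 - P) + z • D₁ - D₂ - (1 - P) * S) := by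
  have : lam - z ≠ 0 := sub_ne_zero.2 hlam
  simp only [simpleElt, mul_add, add_mul, mul_one, one_mul, mul_sub, sub_mul, smul_mul_assoc,
    mul_smul_comm, smul_add, smul_sub, smul_smul, neg_smul]
  match_scalars <;> field_simp <;> ring

theorem mul_simpleElt_eq_of_backlund_residual_eq_zero (hlam : lam ≠ z)
    (h : (S - (z - conj z) • D₁) * (1 - P) + z • D₁ - D₂ - (1 - P) * S = 0) :
    (S - (z - conj z) • D₁) * simpleElt z P lam
      = (-((z - conj z) / (lam - z))) • (lam • D₁ - D₂) + simpleElt z P lam * S := by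
  have key := smul_mul_simpleElt_sub_eq (M := S - (z - conj z) • D₁) (P := P) (S := S) (D₁ := D₁)
    (D₂ := D₂) hlam
  rw [h, sub_self, smul_zero, smul_zero, add_zero, smul_eq_zero,
    or_iff_right (sub_ne_zero.2 hlam)] at key
  exact sub_eq_zero.1 key

theorem backlund_residual_eq_zero_of_mul_simpleElt_eq {lam₁ lam₂ : ℂ} (hz : z.im ≠ 0)
    (h₁ : lam₁ ≠ z) (h₂ : lam₂ ≠ z) (h₁₂ : lam₁ ≠ lam₂)
    (E₁ : M * simpleElt z P lam₁
      = (-((z - conj z) / (lam₁ - z))) • (lam₁ • D₁ - D₂) + simpleElt z P lam₁ * S)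
    (E₂ : M * simpleElt z P lam₂
      = (-((z - conj z) / (lam₂ - z))) • (lam₂ • D₁ - D₂) + simpleElt z P lam₂ * S) :
    (S - (z - conj z) • D₁) * (1 - P) + z • D₁ - D₂ - (1 - P) * S = 0 := by
  have hc : z - conj z ≠ 0 := sub_ne_zero.2 fun h => hz (conj_eq_iff_im.1 h.symm)
  have e₁ := smul_mul_simpleElt_sub_eq (M := M) (P := P) (S := S) (D₁ := D₁) (D₂ := D₂) h₁
  have e₂ := smul_mul_simpleElt_sub_eq (M := M) (P := P) (S := S) (D₁ := D₁) (D₂ := D₂) h₂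
  rw [E₁, sub_self, smul_zero, eq_comm] at e₁
  rw [E₂, sub_self, smul_zero, eq_comm] at e₂
  -- both coefficients of the affine function of `lam` vanish, since it vanishes at two points
  have hM : M = S - (z - conj z) • D₁ := by
    have : (lam₁ - lam₂) • (M - (S - (z - conj z) • D₁)) = 0 := by
      rw [← sub_sub_sub_cancel_right lam₁ lam₂ z, sub_smul, ← add_sub_add_right_eq_sub _ _
        ((z - conj z) • (M * (1 - P) + z • D₁ - D₂ - (1 - P) * S)), e₁, e₂, sub_zero]
    rwa [smul_eq_zero, sub_eq_zero, sub_eq_zero, or_iff_right h₁₂] at this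
  rwa [hM, sub_self, smul_zero, zero_add, smul_eq_zero, or_iff_right hc] at e₁

end DressingFactor

def matDeriv {m k : Type*} (F : ℝ → Matrix m k ℂ) (s : ℝ) : Matrix m k ℂ :=
  fun i j => deriv (fun t => F t i j) s

section MatDeriv

variable {l m k : Type*} {s : ℝ}

theorem matDeriv_mul [Fintype m] {F : ℝ → Matrix l m ℂ} {G : ℝ → Matrix m k ℂ}
    (hF : ∀ i j, DifferentiableAt ℝ (fun t => F t i j) s)
    (hG : ∀ i j, DifferentiableAt ℝ (fun t => G t i j) s) :
    matDeriv (fun t => F t * G t) s = matDeriv F s * G s + F s * matDeriv G s := by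
  ext i j
  simp only [matDeriv, Matrix.mul_apply, Matrix.add_apply]
  rw [deriv_fun_sum (A := fun r t => F t i r * G t r j) fun r _ => (hF i r).mul (hG r j),
     ← Finset.sum_add_distrib]
  exact Finset.sum_congr rfl fun r _ => deriv_fun_mul (hF i r) (hG r j)

theorem matDeriv_conjTranspose {F : ℝ → Matrix m m ℂ}
    (hF : ∀ i j, DifferentiableAt ℝ (fun t => F t i j) s) :
    matDeriv (fun t => (F t)ᴴ) s = (matDeriv F s)ᴴ := by
  ext i j
  exact (hF j i).hasDerivAt.star.deriv

end MatDeriv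

section StarProjectionCurve

variable {m : Type*} [Fintype m] [DecidableEq m] {P : ℝ → Matrix m m ℂ} {s : ℝ}

theorem isGrassmannTangent_matDeriv (hP : ∀ t, IsStarProjection (P t))
    (hd : ∀ i j, DifferentiableAt ℝ (fun t => P t i j) s) :
    IsGrassmannTangent (P s) (matDeriv P s) := by
  constructor
  · calc star (matDeriv P s) = matDeriv (fun t => (P t)ᴴ) s := (matDeriv_conjTranspose hd).symm
      _ = matDeriv P s := by simp_rw [← Matrix.star_eq_conjTranspose, (hP _).isSelfAdjoint.star_eq]
  · have h := matDeriv_mul hd hd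
    simp only [fun t => (hP t).isIdempotentElem.eq] at h
    rw [mul_sub, mul_one, sub_eq_iff_eq_add', ← h]

end StarProjectionCurve

section DressedCurve

variable {n : ℕ} {z lam : ℂ} {P G : ℝ → Matrix (Fin n) (Fin n) ℂ} {s : ℝ}

theorem matDeriv_simpleElt_mul (hP : ∀ i j, DifferentiableAt ℝ (fun t => P t i j) s)
    (hG : ∀ i j, DifferentiableAt ℝ (fun t => G t i j) s) :
    matDeriv (fun t => simpleElt z (P t) lam * G t) s
      = (-((z - conj z) / (lam - z))) • matDeriv P s * G s
        + simpleElt z (P s) lam * matDeriv G s := by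
  have hg : ∀ i j, HasDerivAt (fun t => simpleElt z (P t) lam i j)
      (-((z - conj z) / (lam - z)) * matDeriv P s i j) s := fun i j => by
    simpa [simpleElt, matDeriv] using (((hP i j).hasDerivAt.const_sub _).const_mul
      ((z - conj z) / (lam - z))).const_add ((1 : Matrix (Fin n) (Fin n) ℂ) i j)
  rw [matDeriv_mul (fun i j => (hg i j).differentiableAt) hG]
  congr 2
  ext i j
  exact (hg i j).deriv

end DressedCurve

theorem differentiableAt_entry_comp {E : Type*} [NormedAddCommGroup E] [NormedSpace ℝ E]
    {m k : Type*} {F : E → Matrix m k ℂ} (hF : ∀ i j, Differentiable ℝ fun q => F q i j)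
    {γ : ℝ → E} (hγ : Differentiable ℝ γ) (s : ℝ) (i : m) (j : k) :
    DifferentiableAt ℝ (fun t => F (γ t) i j) s :=
  ((hF i j).comp hγ).differentiableAt

section PartialDerivatives

variable {n : ℕ} {z lam : ℂ} {π F : ℝ × ℝ × ℝ → Matrix (Fin n) (Fin n) ℂ}

theorem pdx_simpleElt_mul (hπ : ∀ i j, Differentiable ℝ fun q => π q i j)
    (hF : ∀ i j, Differentiable ℝ fun q => F q i j) (p : ℝ × ℝ × ℝ) :
    pdx (fun q => simpleElt z (π q) lam * F q) p
      = (-((z - conj z) / (lam - z))) • pdx π p * F p + simpleElt z (π p) lam * pdx F p :=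
  matDeriv_simpleElt_mul (differentiableAt_entry_comp hπ (γ := fun t => (t, p.2.1, p.2.2))
    (by fun_prop) _) (differentiableAt_entry_comp hF (by fun_prop) _)

theorem pdu_simpleElt_mul (hπ : ∀ i j, Differentiable ℝ fun q => π q i j)
    (hF : ∀ i j, Differentiable ℝ fun q => F q i j) (p : ℝ × ℝ × ℝ) :
    pdu (fun q => simpleElt z (π q) lam * F q) p
      = (-((z - conj z) / (lam - z))) • pdu π p * F p + simpleElt z (π p) lam * pdu F p :=
  matDeriv_simpleElt_mul (differentiableAt_entry_comp hπ (γ := fun t => (p.1, t, p.2.2))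
    (by fun_prop) _) (differentiableAt_entry_comp hF (by fun_prop) _)

theorem pdv_simpleElt_mul (hπ : ∀ i j, Differentiable ℝ fun q => π q i j)
    (hF : ∀ i j, Differentiable ℝ fun q => F q i j) (p : ℝ × ℝ × ℝ) :
    pdv (fun q => simpleElt z (π q) lam * F q) p
      = (-((z - conj z) / (lam - z))) • pdv π p * F p + simpleElt z (π p) lam * pdv F p :=
  matDeriv_simpleElt_mul (differentiableAt_entry_comp hπ (γ := fun t => (p.1, p.2.1, t))
    (by fun_prop) _) (differentiableAt_entry_comp hF (by fun_prop) _)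

theorem isGrassmannTangent_pdx (hP : ∀ q, IsStarProjection (π q))
    (hπ : ∀ i j, Differentiable ℝ fun q => π q i j) (p : ℝ × ℝ × ℝ) :
    IsGrassmannTangent (π p) (pdx π p) :=
  isGrassmannTangent_matDeriv (fun _ => hP _)
    (differentiableAt_entry_comp hπ (γ := fun t => (t, p.2.1, p.2.2)) (by fun_prop) _)

theorem isGrassmannTangent_pdu (hP : ∀ q, IsStarProjection (π q))
    (hπ : ∀ i j, Differentiable ℝ fun q => π q i j) (p : ℝ × ℝ × ℝ) :
    IsGrassmannTangent (π p) (pdu π p) :=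
  isGrassmannTangent_matDeriv (fun _ => hP _)
    (differentiableAt_entry_comp hπ (γ := fun t => (p.1, t, p.2.2)) (by fun_prop) _)

theorem isGrassmannTangent_pdv (hP : ∀ q, IsStarProjection (π q))
    (hπ : ∀ i j, Differentiable ℝ fun q => π q i j) (p : ℝ × ℝ × ℝ) :
    IsGrassmannTangent (π p) (pdv π p) :=
  isGrassmannTangent_matDeriv (fun _ => hP _)
    (differentiableAt_entry_comp hπ (γ := fun t => (p.1, p.2.1, t)) (by fun_prop) _)

end PartialDerivatives

theorem IsHermitianProj.isStarProjection {n : ℕ} {P : Matrix (Fin n) (Fin n) ℂ}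
    (hP : IsHermitianProj P) : IsStarProjection P :=
  ⟨hP.2, hP.1⟩

section DressedLaxEquations

variable {n : ℕ} {z lam : ℂ} {π F : ℝ × ℝ × ℝ → Matrix (Fin n) (Fin n) ℂ}
  {S M : Matrix (Fin n) (Fin n) ℂ} {p : ℝ × ℝ × ℝ}

theorem smul_pdx_sub_pdu_simpleElt_mul_eq_iff (hπ : ∀ i j, Differentiable ℝ fun q => π q i j)
    (hF : ∀ i j, Differentiable ℝ fun q => F q i j) (hFp : IsUnit (F p))
    (hS : lam • pdx F p - pdu F p = S * F p) :
    lam • pdx (fun q => simpleElt z (π q) lam * F q) p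
        - pdu (fun q => simpleElt z (π q) lam * F q) p = M * (simpleElt z (π p) lam * F p) ↔
      M * simpleElt z (π p) lam = (-((z - conj z) / (lam - z))) • (lam • pdx π p - pdu π p)
        + simpleElt z (π p) lam * S := by
  rw [pdx_simpleElt_mul hπ hF, pdu_simpleElt_mul hπ hF]
  exact lax_mul_eq_iff hFp hS

theorem smul_pdv_sub_pdx_simpleElt_mul_eq_iff (hπ : ∀ i j, Differentiable ℝ fun q => π q i j)
    (hF : ∀ i j, Differentiable ℝ fun q => F q i j) (hFp : IsUnit (F p))
    (hS : lam • pdv F p - pdx F p = S * F p) :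
    lam • pdv (fun q => simpleElt z (π q) lam * F q) p
        - pdx (fun q => simpleElt z (π q) lam * F q) p = M * (simpleElt z (π p) lam * F p) ↔
      M * simpleElt z (π p) lam = (-((z - conj z) / (lam - z))) • (lam • pdv π p - pdx π p)
        + simpleElt z (π p) lam * S := by
  rw [pdv_simpleElt_mul hπ hF, pdx_simpleElt_mul hπ hF]
  exact lax_mul_eq_iff hFp hS

end DressedLaxEquations

theorem statement14_general {n : ℕ} (z : ℂ) (hz : z.im ≠ 0)
    (Ω : Set ℂ) (hΩ : IsOpen Ω) (hzΩ : z ∈ Ω)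
    (ψ : ℝ × ℝ × ℝ → ℂ → Matrix (Fin n) (Fin n) ℂ)
    (hinv : ∀ p, ∀ lam ∈ Ω, IsUnit (ψ p lam))
    (hC1 : ∀ lam ∈ Ω, ∀ i j, ContDiff ℝ 1 (fun p => ψ p lam i j))
    (A B : ℝ × ℝ × ℝ → Matrix (Fin n) (Fin n) ℂ)
    (hAskew : ∀ p, (A p)ᴴ = -A p) (hBskew : ∀ p, (B p)ᴴ = -B p)
    (hA : ∀ p, ∀ lam ∈ Ω,
      lam • pdx (fun q => ψ q lam) p - pdu (fun q => ψ q lam) p = A p * ψ p lam)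
    (hB : ∀ p, ∀ lam ∈ Ω,
      lam • pdv (fun q => ψ q lam) p - pdx (fun q => ψ q lam) p = B p * ψ p lam)
    (π : ℝ × ℝ × ℝ → Matrix (Fin n) (Fin n) ℂ)
    (hπ : ∀ p, IsHermitianProj (π p))
    (hπC1 : ∀ i j, ContDiff ℝ 1 (fun p => π p i j)) :
    (∃ At Bt : ℝ × ℝ × ℝ → Matrix (Fin n) (Fin n) ℂ,
      ∀ p, ∀ lam ∈ Ω, lam ≠ z →
        (lam • pdx (fun q => simpleElt z (π q) lam * ψ q lam) p
            - pdu (fun q => simpleElt z (π q) lam * ψ q lam) p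
          = At p * (simpleElt z (π p) lam * ψ p lam)) ∧
        (lam • pdv (fun q => simpleElt z (π q) lam * ψ q lam) p
            - pdx (fun q => simpleElt z (π q) lam * ψ q lam) p
          = Bt p * (simpleElt z (π p) lam * ψ p lam)))
    ↔ (∀ p, (1 - π p) * (z • pdx π p - pdu π p - A p * π p) = 0 ∧
           (1 - π p) * (z • pdv π p - pdx π p - B p * π p) = 0) := by
  obtain ⟨lam₁, ⟨hlam₁, hlam₁z⟩, lam₂, ⟨hlam₂, hlam₂z⟩, hlam₁₂⟩ :=
    ((infinite_of_mem_nhds z (hΩ.mem_nhds hzΩ)).sdiff (Set.finite_singleton z)).nontrivial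
  have hπd i j : Differentiable ℝ fun p => π p i j := (hπC1 i j).differentiable one_ne_zero
  have hψd : ∀ lam ∈ Ω, ∀ i j, Differentiable ℝ fun p => ψ p lam i j :=
    fun lam hlam i j => (hC1 lam hlam i j).differentiable one_ne_zero
  have laxA p lam (hlam : lam ∈ Ω) M := smul_pdx_sub_pdu_simpleElt_mul_eq_iff (z := z) (M := M)
    hπd (hψd lam hlam) (hinv p lam hlam) (hA p lam hlam)
  have laxB p lam (hlam : lam ∈ Ω) M := smul_pdv_sub_pdx_simpleElt_mul_eq_iff (z := z) (M := M)
    hπd (hψd lam hlam) (hinv p lam hlam) (hB p lam hlam)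
  have hP p := (hπ p).isStarProjection
  have residualA p := backlund_residual_eq_zero_iff (z := z) (hP p)
    (isGrassmannTangent_pdx hP hπd p) (isGrassmannTangent_pdu hP hπd p) (hAskew p)
  have residualB p := backlund_residual_eq_zero_iff (z := z) (hP p)
    (isGrassmannTangent_pdv hP hπd p) (isGrassmannTangent_pdx hP hπd p) (hBskew p)
  constructor
  · rintro ⟨At, Bt, h⟩ p
    refine ⟨(residualA p).1 ?_, (residualB p).1 ?_⟩
    · exact backlund_residual_eq_zero_of_mul_simpleElt_eq hz hlam₁z hlam₂z hlam₁₂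
        ((laxA p _ hlam₁ _).1 (h p _ hlam₁ hlam₁z).1)
        ((laxA p _ hlam₂ _).1 (h p _ hlam₂ hlam₂z).1)
    · exact backlund_residual_eq_zero_of_mul_simpleElt_eq hz hlam₁z hlam₂z hlam₁₂
        ((laxB p _ hlam₁ _).1 (h p _ hlam₁ hlam₁z).2)
        ((laxB p _ hlam₂ _).1 (h p _ hlam₂ hlam₂z).2)
  · intro h
    refine ⟨fun p => A p - (z - conj z) • pdx π p, fun p => B p - (z - conj z) • pdv π p,
      fun p lam hlam hlamz => ⟨(laxA p lam hlam _).2 ?_, (laxB p lam hlam _).2 ?_⟩⟩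
    · exact mul_simpleElt_eq_of_backlund_residual_eq_zero hlamz ((residualA p).2 (h p).1)
    · exact mul_simpleElt_eq_of_backlund_residual_eq_zero hlamz ((residualB p).2 (h p).2)

/-- Proposition 7.1 (analytic Bäcklund transformation): g_{z,π}ψ is an extended solution
(i.e. ψ₁ = g_{z,π}ψ satisfies the linear system with some coefficients Ã, B̃) if and only
if π satisfies π^⊥(z∂_xπ − ∂_uπ − Aπ) = 0 and π^⊥(z∂_vπ − ∂_xπ − Bπ) = 0. -/
theorem statement14 {n : ℕ} (hn : 1 ≤ n) (z : ℂ) (hz : z.im ≠ 0)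
    (Ω : Set ℂ) (hΩ : IsOpen Ω) (hzΩ : z ∈ Ω)
    (ψ : ℝ × ℝ × ℝ → ℂ → Matrix (Fin n) (Fin n) ℂ)
    (hinv : ∀ p, ∀ lam ∈ Ω, IsUnit (ψ p lam))
    (hC1 : ∀ lam ∈ Ω, ∀ i j, ContDiff ℝ 1 (fun p => ψ p lam i j))
    (A B : ℝ × ℝ × ℝ → Matrix (Fin n) (Fin n) ℂ)
    (hAskew : ∀ p, (A p)ᴴ = -A p) (hBskew : ∀ p, (B p)ᴴ = -B p)
    (hA : ∀ p, ∀ lam ∈ Ω,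
      lam • pdx (fun q => ψ q lam) p - pdu (fun q => ψ q lam) p = A p * ψ p lam)
    (hB : ∀ p, ∀ lam ∈ Ω,
      lam • pdv (fun q => ψ q lam) p - pdx (fun q => ψ q lam) p = B p * ψ p lam)
    (π : ℝ × ℝ × ℝ → Matrix (Fin n) (Fin n) ℂ)
    (hπ : ∀ p, IsHermitianProj (π p))
    (hπC1 : ∀ i j, ContDiff ℝ 1 (fun p => π p i j)) :
    (∃ At Bt : ℝ × ℝ × ℝ → Matrix (Fin n) (Fin n) ℂ,
      ∀ p, ∀ lam ∈ Ω, lam ≠ z →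
        (lam • pdx (fun q => simpleElt z (π q) lam * ψ q lam) p
            - pdu (fun q => simpleElt z (π q) lam * ψ q lam) p
          = At p * (simpleElt z (π p) lam * ψ p lam)) ∧
        (lam • pdv (fun q => simpleElt z (π q) lam * ψ q lam) p
            - pdx (fun q => simpleElt z (π q) lam * ψ q lam) p
          = Bt p * (simpleElt z (π p) lam * ψ p lam)))
    ↔ (∀ p, (1 - π p) * (z • pdx π p - pdu π p - A p * π p) = 0 ∧
           (1 - π p) * (z • pdv π p - pdx π p - B p * π p) = 0) :=
  statement14_general z hz Ω hΩ hzΩ ψ hinv hC1 A B hAskew hBskew hA hB π hπ hπC1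
end
end

section
/- Let n ≥ 1, z ∈ ℂ∖ℝ, 1 ≤ r ≤ n, and let A, B : ℝ³ → Mₙ(ℂ). Let V : ℝ³ → M_{n×r}(ℂ) be continuously differentiable with V(p) of rank r for every p, satisfying z∂_xV − ∂_uV = AV and z∂_vV − ∂_xV = BV on ℝ³. Then π := V(V*V)⁻¹V* is a well-defined continuously differentiable family of Hermitian projections whose range at each p is the column span of V(p), and π satisfies π^⊥(z∂_xπ − ∂_uπ − Aπ) = 0 and π^⊥(z∂_vπ − ∂_xπ − Bπ) = 0 on ℝ³. -/
open Matrix Complex Filter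

noncomputable section

/-- The Hermitian projection onto the column span of a full-rank n×r matrix V,
π = V(V*V)⁻¹V*. -/
def projOf {n r : ℕ} (V : Matrix (Fin n) (Fin r) ℂ) : Matrix (Fin n) (Fin n) ℂ :=
  V * (Vᴴ * V)⁻¹ * Vᴴ

/-
Write `π = V W` with `W = (V*V)⁻¹V*`, which is C¹ by Cramer's rule. Both operators
`D = z∂_x − ∂_u` and `D = z∂_v − ∂_x` are derivations, so `Dπ = (DV) W + V (DW)`.
Since `π^⊥ V = 0`, applying `π^⊥` kills `V (DW)`, and the linear system `DV = CV`
turns the remaining term into `π^⊥ C V W = π^⊥ C π`.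
-/

section Smoothness

variable {E : Type*} [NormedAddCommGroup E] [NormedSpace ℝ E] {k : WithTop ℕ∞}
  {l m o : Type*}

theorem ContDiff.matrix_det [Fintype m] [DecidableEq m] {M : E → Matrix m m ℂ}
    (hM : ∀ i j, ContDiff ℝ k fun p => M p i j) :
    ContDiff ℝ k fun p => (M p).det := by
  simp only [Matrix.det_apply']
  exact ContDiff.sum fun σ _ => contDiff_const.mul (contDiff_prod fun i _ => hM _ _)

theorem ContDiff.matrix_inv_apply [Fintype m] [DecidableEq m] {M : E → Matrix m m ℂ}
    (hM : ∀ i j, ContDiff ℝ k fun p => M p i j) (hU : ∀ p, IsUnit (M p)) (a b : m) :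
    ContDiff ℝ k fun p => (M p)⁻¹ a b := by
  have hdet : ∀ p, (M p).det ≠ 0 := fun p =>
    ((Matrix.isUnit_iff_isUnit_det _).mp (hU p)).ne_zero
  simp only [Matrix.inv_def, Matrix.smul_apply, Ring.inverse_eq_inv', smul_eq_mul,
    Matrix.adjugate_apply]
  refine ((ContDiff.matrix_det hM).inv hdet).mul (ContDiff.matrix_det fun i j => ?_)
  by_cases hib : i = b
  · subst hib
    simpa only [Matrix.updateRow_self] using contDiff_const
  · simpa only [Matrix.updateRow_ne hib] using hM i j

theorem ContDiff.matrix_mul_apply [Fintype m] {M : E → Matrix l m ℂ} {N : E → Matrix m o ℂ}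
    (hM : ∀ i j, ContDiff ℝ k fun p => M p i j) (hN : ∀ i j, ContDiff ℝ k fun p => N p i j)
    (i : l) (j : o) :
    ContDiff ℝ k fun p => (M p * N p) i j := by
  simp only [Matrix.mul_apply]
  exact ContDiff.sum fun c _ => (hM i c).mul (hN c j)

theorem ContDiff.matrix_conjTranspose_apply {M : E → Matrix l m ℂ}
    (hM : ∀ i j, ContDiff ℝ k fun p => M p i j) (i : m) (j : l) :
    ContDiff ℝ k fun p => (M p)ᴴ i j :=
  Complex.conjCLE.contDiff.comp (hM j i)

end Smoothness

section Leibniz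

variable {l m o : Type*} [Fintype m]

theorem deriv_matrix_mul_apply {F : ℝ → Matrix l m ℂ} {G : ℝ → Matrix m o ℂ} {t : ℝ}
    (hF : ∀ i j, DifferentiableAt ℝ (fun s => F s i j) t)
    (hG : ∀ i j, DifferentiableAt ℝ (fun s => G s i j) t) (i : l) (j : o) :
    deriv (fun s => (F s * G s) i j) t
      = (Matrix.of (fun i j => deriv (fun s => F s i j) t) * G t
        + F t * Matrix.of fun i j => deriv (fun s => G s i j) t) i j := by
  simp only [Matrix.mul_apply, Matrix.add_apply, Matrix.of_apply]
  rw [deriv_fun_sum (A := fun c s => F s i c * G s c j) fun c _ => (hF i c).mul (hG c j),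
    ← Finset.sum_add_distrib]
  exact Finset.sum_congr rfl fun c _ => deriv_fun_mul (hF i c) (hG c j)

variable {F : ℝ × ℝ × ℝ → Matrix l m ℂ} {G : ℝ × ℝ × ℝ → Matrix m o ℂ}

theorem pdx_mul (hF : ∀ i j, Differentiable ℝ fun p => F p i j)
    (hG : ∀ i j, Differentiable ℝ fun p => G p i j) (p : ℝ × ℝ × ℝ) :
    pdx (fun q => F q * G q) p = pdx F p * G p + F p * pdx G p := by
  have hline : Differentiable ℝ fun s : ℝ => ((s, p.2.1, p.2.2) : ℝ × ℝ × ℝ) := by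
    fun_prop
  funext i j
  exact deriv_matrix_mul_apply (fun i j => ((hF i j).comp hline).differentiableAt)
    (fun i j => ((hG i j).comp hline).differentiableAt) i j

theorem pdu_mul (hF : ∀ i j, Differentiable ℝ fun p => F p i j)
    (hG : ∀ i j, Differentiable ℝ fun p => G p i j) (p : ℝ × ℝ × ℝ) :
    pdu (fun q => F q * G q) p = pdu F p * G p + F p * pdu G p := by
  have hline : Differentiable ℝ fun s : ℝ => ((p.1, s, p.2.2) : ℝ × ℝ × ℝ) := by
    fun_prop
  funext i j
  exact deriv_matrix_mul_apply (fun i j => ((hF i j).comp hline).differentiableAt)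
    (fun i j => ((hG i j).comp hline).differentiableAt) i j

theorem pdv_mul (hF : ∀ i j, Differentiable ℝ fun p => F p i j)
    (hG : ∀ i j, Differentiable ℝ fun p => G p i j) (p : ℝ × ℝ × ℝ) :
    pdv (fun q => F q * G q) p = pdv F p * G p + F p * pdv G p := by
  have hline : Differentiable ℝ fun s : ℝ => ((p.1, p.2.1, s) : ℝ × ℝ × ℝ) := by
    fun_prop
  funext i j
  exact deriv_matrix_mul_apply (fun i j => ((hF i j).comp hline).differentiableAt)
    (fun i j => ((hG i j).comp hline).differentiableAt) i j

theorem Matrix.smul_sub_eq_of_leibniz {R : Type*} [CommRing R] (z : R)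
    {P₁ P₂ : Matrix l o R} {F F₁ F₂ : Matrix l m R} {G G₁ G₂ : Matrix m o R}
    (h₁ : P₁ = F₁ * G + F * G₁) (h₂ : P₂ = F₂ * G + F * G₂) :
    z • P₁ - P₂ = (z • F₁ - F₂) * G + F * (z • G₁ - G₂) := by
  subst h₁ h₂
  simp only [Matrix.sub_mul, Matrix.mul_sub, Matrix.smul_mul, Matrix.mul_smul, smul_add]
  abel

end Leibniz

open scoped ComplexOrder in
theorem Matrix.isUnit_conjTranspose_mul_self_of_rank_eq {𝕜 m n : Type*} [RCLike 𝕜]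
    [Fintype m] [Fintype n] [DecidableEq n] {A : Matrix m n 𝕜} (h : A.rank = Fintype.card n) :
    IsUnit (Aᴴ * A) := by
  have hrange : LinearMap.range (Aᴴ * A).mulVecLin = ⊤ := by
    apply Submodule.eq_top_of_finrank_eq
    rw [← Matrix.rank, Matrix.rank_conjTranspose_mul_self, h, Module.finrank_fintype_fun_eq_card]
  exact Matrix.mulVec_surjective_iff_isUnit.mp (LinearMap.range_eq_top.mp hrange)

theorem mrange_mul_le {n m k : ℕ} (A : Matrix (Fin n) (Fin m) ℂ)
    (B : Matrix (Fin m) (Fin k) ℂ) : mrange (A * B) ≤ mrange A := by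
  rintro _ ⟨x, rfl⟩
  exact ⟨Matrix.toEuclideanLin B x, by
    simp [Matrix.toLpLin_apply, Matrix.mulVec_mulVec]⟩

section Projection

variable {n r : ℕ} {V : Matrix (Fin n) (Fin r) ℂ}

theorem projOf_eq_mul (V : Matrix (Fin n) (Fin r) ℂ) :
    projOf V = V * ((Vᴴ * V)⁻¹ * Vᴴ) :=
  Matrix.mul_assoc _ _ _

theorem conjTranspose_projOf (V : Matrix (Fin n) (Fin r) ℂ) : (projOf V)ᴴ = projOf V := by
  simp only [projOf, Matrix.conjTranspose_mul, Matrix.conjTranspose_conjTranspose,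
    Matrix.conjTranspose_nonsing_inv, Matrix.mul_assoc]

theorem projOf_mul_self (h : IsUnit (Vᴴ * V)) : projOf V * V = V := by
  simp only [projOf, Matrix.mul_assoc]
  rw [Matrix.nonsing_inv_mul _ ((Matrix.isUnit_iff_isUnit_det _).mp h), Matrix.mul_one]

theorem projOf_mul_projOf (h : IsUnit (Vᴴ * V)) : projOf V * projOf V = projOf V := by
  calc projOf V * projOf V = (projOf V * V) * ((Vᴴ * V)⁻¹ * Vᴴ) := by
        simp only [projOf, Matrix.mul_assoc]
    _ = projOf V := by rw [projOf_mul_self h, projOf_eq_mul]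

theorem mrange_projOf (h : IsUnit (Vᴴ * V)) : mrange (projOf V) = mrange V := by
  refine le_antisymm ?_ ?_
  · rw [projOf_eq_mul]
    exact mrange_mul_le _ _
  · conv_lhs => rw [← projOf_mul_self h]
    exact mrange_mul_le _ _

/-- `Dπ`, `DV`, `DW` stand for the values of a derivation `D` on `π = V W`, `V`, `W`. -/
theorem compl_mul_sub_mul_eq_zero {π Dπ C : Matrix (Fin n) (Fin n) ℂ}
    {DV : Matrix (Fin n) (Fin r) ℂ} {W DW : Matrix (Fin r) (Fin n) ℂ}
    (hπ : π = V * W) (hπV : π * V = V) (hD : Dπ = DV * W + V * DW) (hDV : DV = C * V) :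
    (1 - π) * (Dπ - C * π) = 0 := by
  have hcompl : (1 - π) * V = 0 := by rw [Matrix.sub_mul, hπV, Matrix.one_mul, sub_self]
  have hDπ : Dπ - C * π = V * DW := by rw [hD, hDV, hπ, Matrix.mul_assoc]; abel
  rw [hDπ, ← Matrix.mul_assoc, hcompl, Matrix.zero_mul]

end Projection

theorem statement17_general {n : ℕ} (z : ℂ) (r : ℕ)
    (A B : ℝ × ℝ × ℝ → Matrix (Fin n) (Fin n) ℂ)
    (V : ℝ × ℝ × ℝ → Matrix (Fin n) (Fin r) ℂ)
    (hVC1 : ∀ i j, ContDiff ℝ 1 (fun p => V p i j))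
    (hVrank : ∀ p, (V p).rank = r)
    (hV1 : ∀ p, z • pdx V p - pdu V p = A p * V p)
    (hV2 : ∀ p, z • pdv V p - pdx V p = B p * V p) :
    (∀ p, IsUnit ((V p)ᴴ * V p)) ∧
    (∀ p, IsHermitianProj (projOf (V p))) ∧
    (∀ i j, ContDiff ℝ 1 (fun p => projOf (V p) i j)) ∧
    (∀ p, mrange (projOf (V p)) = mrange (V p)) ∧
    (∀ p, (1 - projOf (V p)) *
        (z • pdx (fun q => projOf (V q)) p - pdu (fun q => projOf (V q)) p
          - A p * projOf (V p)) = 0) ∧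
    (∀ p, (1 - projOf (V p)) *
        (z • pdv (fun q => projOf (V q)) p - pdx (fun q => projOf (V q)) p
          - B p * projOf (V p)) = 0) := by
  have hG p : IsUnit ((V p)ᴴ * V p) :=
    Matrix.isUnit_conjTranspose_mul_self_of_rank_eq (by rw [hVrank, Fintype.card_fin])
  set W := fun p => ((V p)ᴴ * V p)⁻¹ * (V p)ᴴ
  have hVH := ContDiff.matrix_conjTranspose_apply hVC1
  have hWC1 : ∀ i j, ContDiff ℝ 1 fun p => W p i j :=
    ContDiff.matrix_mul_apply
      (ContDiff.matrix_inv_apply (ContDiff.matrix_mul_apply hVH hVC1) hG) hVH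
  have hπ : (fun p => projOf (V p)) = fun p => V p * W p := funext fun p => projOf_eq_mul (V p)
  have hVd i j := (hVC1 i j).differentiable one_ne_zero
  have hWd i j := (hWC1 i j).differentiable one_ne_zero
  refine ⟨hG, fun p => ⟨conjTranspose_projOf _, projOf_mul_projOf (hG p)⟩,
    fun i j => by simpa only [projOf_eq_mul] using ContDiff.matrix_mul_apply hVC1 hWC1 i j,
    fun p => mrange_projOf (hG p), fun p => ?_, fun p => ?_⟩
  · rw [hπ]
    exact compl_mul_sub_mul_eq_zero (projOf_eq_mul _) (projOf_mul_self (hG p))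
      (Matrix.smul_sub_eq_of_leibniz z (pdx_mul hVd hWd p) (pdu_mul hVd hWd p)) (hV1 p)
  · rw [hπ]
    exact compl_mul_sub_mul_eq_zero (projOf_eq_mul _) (projOf_mul_self (hG p))
      (Matrix.smul_sub_eq_of_leibniz z (pdv_mul hVd hWd p) (pdx_mul hVd hWd p)) (hV2 p)

/-- Converse part of Lemma 8.2: if V is a C¹ rank-r solution of zV_x − V_u = AV,
zV_v − V_x = BV, then π = V(V*V)⁻¹V* is a well-defined C¹ family of Hermitian projections
whose range is the column span of V, and π solves the analytic BT equations. -/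
theorem statement17 {n : ℕ} (hn : 1 ≤ n) (z : ℂ) (hz : z.im ≠ 0)
    (r : ℕ) (hr1 : 1 ≤ r) (hrn : r ≤ n)
    (A B : ℝ × ℝ × ℝ → Matrix (Fin n) (Fin n) ℂ)
    (V : ℝ × ℝ × ℝ → Matrix (Fin n) (Fin r) ℂ)
    (hVC1 : ∀ i j, ContDiff ℝ 1 (fun p => V p i j))
    (hVrank : ∀ p, (V p).rank = r)
    (hV1 : ∀ p, z • pdx V p - pdu V p = A p * V p)
    (hV2 : ∀ p, z • pdv V p - pdx V p = B p * V p) :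
    (∀ p, IsUnit ((V p)ᴴ * V p)) ∧
    (∀ p, IsHermitianProj (projOf (V p))) ∧
    (∀ i j, ContDiff ℝ 1 (fun p => projOf (V p) i j)) ∧
    (∀ p, mrange (projOf (V p)) = mrange (V p)) ∧
    (∀ p, (1 - projOf (V p)) *
        (z • pdx (fun q => projOf (V q)) p - pdu (fun q => projOf (V q)) p
          - A p * projOf (V p)) = 0) ∧
    (∀ p, (1 - projOf (V p)) *
        (z • pdv (fun q => projOf (V q)) p - pdx (fun q => projOf (V q)) p
          - B p * projOf (V p)) = 0) :=
  statement17_general z r A B V hVC1 hVrank hV1 hV2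
end
end
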